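/- arXiv:2301.05414 — 6 statements merged into one kernel-verified Lean document; each statement's English description precedes it below -/
import Mathlib

section
/- (Proposition: complete form J^{(2ν,1)}_ℓ, even order m = 2ν.) Let ν ≥ 1, ℓ ≥ 0. Suppose given smooth totally symmetric tensor fields L_{(2N−1)i₁...i_r} for odd ranks r ∈ {1,3,…,2ν−1} and N = 1,…,ℓ, L_{(2N)i₁...i_r} for even ranks r ∈ {2,4,…,2ν} and N = 0,…,ℓ, and a smooth function G(q), such that: (i) L_{(0)i₁...i_{2ν}} is a (2ν)-th order generalized Killing tensor, and for N = 1,…,ℓ the tensors L_{(2N)i₁...i_{2ν}} = −(1/(2N)) L_{(2N−1)(i₁...i_{2ν−1}|i_{2ν})} are (2ν)-th order generalized Killing tensors; (ii) G_{,i₁} = 2 L_{(0)i₁i₂} Q^{i₂} − L_{(1)i₁}, with the term L_{(1)i₁} present only if ℓ > 0; (iii) for N = 1,…,ℓ: (L_{(2N−1)c}Q^c)_{,i₁} = 4N L_{(2N)i₁i₂} Q^{i₂} − 2N(2N+1) L_{(2N+1)i₁}, the last term present only if N < ℓ; (iv) for ν > 1, N = 1,…,ℓ and even r ∈ {2,4,…,2ν−2}: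 L_{(2N−1)(i₁...i_{r−1}|i_r)} = (r+1) L_{(2N−1)i₁...i_r i_{r+1}} Q^{i_{r+1}} − 2N L_{(2N)i₁...i_r}; (v) for ν > 1, N = 0,…,ℓ and odd r ∈ {3,5,…,2ν−1}: L_{(2N)(i₁...i_{r−1}|i_r)} = (r+1) L_{(2N)i₁...i_r i_{r+1}} Q^{i_{r+1}} − (2N+1) L_{(2N+1)i₁...i_r}, the last term present only if N < ℓ. Then J = Σ_{odd r ≤ 2ν} Σ_{N=1}^{ℓ} t^{2N−1} L_{(2N−1)i₁...i_r} q̇^{i₁}⋯q̇^{i_r} + Σ_{even r ≤ 2ν} Σ_{N=0}^{ℓ} t^{2N} L_{(2N)i₁...i_r} q̇^{i₁}⋯q̇^{i_r} + Σ_{N=1}^{ℓ} (L_{(2N−1)c}Q^c) t^{2N}/(2N) + G(q) is a first integral of q̈^a = −Γ^a_{bc}q̇^bq̇^c − Q^a. -/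
/-!
Give the family `L` the rank-0 components `L_{(M)} := φ_M`, the coefficient of `t^M` in the
velocity-free part of `J` (`φ_0 = G`, `φ_{M+1} = L_{(M)c}Q^c / (M+1)`). Then
`J = Σ_{M ≤ 2ℓ, r ≤ 2ν} t^M L_{(M)i₁…i_r} q̇^{i₁}⋯q̇^{i_r}`, and the conditions (i)–(v) all take
one "ladder" form
  `L_{(M)(i₁…i_r|i_{r+1})} = (r+2) L_{(M)i₁…i_{r+1}c} Q^c − (M+1) L_{(M+1)i₁…i_{r+1}}`.
Along a solution, the time derivative of `L_{(M)i₁…i_r} q̇^{i₁}⋯q̇^{i_r}` is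
`L_{(M)i₁…i_r|i_{r+1}} q̇^{i₁}⋯q̇^{i_{r+1}} − r L_{(M)i₁…i_{r−1}c} Q^c q̇^{i₁}⋯q̇^{i_{r−1}}`: the
connection terms of the equations of motion are exactly those of the covariant derivative, and
only its symmetric part survives the contraction with `q̇`. Inserting the ladder, `dJ/dt`
telescopes to zero, in `r` for the force terms and in `M` for the terms coming from `t^M`.
-/

noncomputable section
open scoped BigOperators

/-- Points of the configuration space `ℝ^D`. -/
abbrev Vec (D : ℕ) := Fin D → ℝ

/-- Connection coefficients: `Conn D Γ` with `Γ q a b c = Γ^a_{bc}(q)`. -/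
abbrev Conn (D : ℕ) := Vec D → Fin D → Fin D → Fin D → ℝ

/-- Totally covariant `r`-tensor fields on `ℝ^D`. -/
abbrev Tens (D r : ℕ) := Vec D → (Fin r → Fin D) → ℝ

/-- Partial derivative `∂f/∂q^j`. -/
def pd {D : ℕ} (j : Fin D) (f : Vec D → ℝ) (q : Vec D) : ℝ :=
  fderiv ℝ f q (Pi.single j 1)

/-- Covariant derivative `T_{i₁...i_r|j}` (the last slot is the derivative index `j`):
`T_{i₁...i_r|j} = ∂T_{i₁...i_r}/∂q^j − Σ_k Γ^s_{i_k j} T_{i₁...s...i_r}`. -/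
def covTens {D r : ℕ} (Γ : Conn D) (T : Tens D r) : Tens D (r + 1) :=
  fun q idx =>
    pd (idx (Fin.last r)) (fun p => T p fun k => idx k.castSucc) q
      - ∑ k : Fin r, ∑ s : Fin D,
          Γ q s (idx k.castSucc) (idx (Fin.last r)) *
            T q (Function.update (fun l => idx l.castSucc) k s)

/-- Symmetrization of a tensor over all of its indices. -/
def symT {D r : ℕ} (T : Tens D r) : Tens D r :=
  fun q idx => (r.factorial : ℝ)⁻¹ * ∑ σ : Equiv.Perm (Fin r), T q (idx ∘ σ)

/-- Totally symmetric tensor field. -/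
def IsSymTens {D r : ℕ} (T : Tens D r) : Prop :=
  ∀ (q : Vec D) (idx : Fin r → Fin D) (σ : Equiv.Perm (Fin r)), T q (idx ∘ σ) = T q idx

/-- Smooth tensor field. -/
def SmoothTens {D r : ℕ} (T : Tens D r) : Prop :=
  ∀ idx : Fin r → Fin D, ContDiff ℝ (⊤ : ℕ∞) fun q => T q idx

/-- Generalized Killing tensor of order `r` for the connection `Γ`:
`T_{(i₁...i_r|i_{r+1})} = 0`. -/
def IsGenKT {D r : ℕ} (Γ : Conn D) (T : Tens D r) : Prop :=
  ∀ q idx, symT (covTens Γ T) q idx = 0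

/-- `q, v` solve `q̈^a = -Γ^a_{bc}(q) q̇^b q̇^c - Q^a(q)` on the set `s ⊆ ℝ`. -/
def IsSolutionOn {D : ℕ} (Γ : Conn D) (Q : Vec D → Fin D → ℝ)
    (s : Set ℝ) (q v : ℝ → Vec D) : Prop :=
  ∀ t ∈ s, ∀ a : Fin D,
    HasDerivAt (fun τ => q τ a) (v t a) t ∧
    HasDerivAt (fun τ => v τ a)
      (-(∑ b, ∑ c, Γ (q t) a b c * v t b * v t c) - Q (q t) a) t

/-- `I(t,q,q̇)` is a first integral of the system: it is constant along every
(C²) solution defined on an open interval. -/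
def FirstIntegral {D : ℕ} (Γ : Conn D) (Q : Vec D → Fin D → ℝ)
    (I : ℝ → Vec D → Vec D → ℝ) : Prop :=
  ∀ (a b : ℝ) (q v : ℝ → Vec D), IsSolutionOn Γ Q (Set.Ioo a b) q v →
    ∀ t₁ ∈ Set.Ioo a b, ∀ t₂ ∈ Set.Ioo a b,
      I t₁ (q t₁) (v t₁) = I t₂ (q t₂) (v t₂)

/-- The contraction `L_c Q^c` of a rank-1 tensor with the generalized forces. -/
def dotQ {D : ℕ} (L : Tens D 1) (Q : Vec D → Fin D → ℝ) (q : Vec D) : ℝ :=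
  ∑ c, L q (fun _ => c) * Q q c

open Finset

section Contraction

variable {D r : ℕ}

def contractVel (T : Tens D r) (q v : Vec D) : ℝ :=
  ∑ idx : Fin r → Fin D, T q idx * ∏ k, v (idx k)

-- The derivative of `v ↦ contractVel T q v` in the direction `w`.
def dirContractVel (T : Tens D r) (q v w : Vec D) : ℝ :=
  ∑ idx : Fin r → Fin D, T q idx * ∑ k, w (idx k) * ∏ l ∈ univ.erase k, v (idx l)

def contractLast (T : Tens D (r + 1)) (Q : Vec D → Fin D → ℝ) : Tens D r :=
  fun q idx => ∑ j, T q (Fin.snoc idx j) * Q q j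

lemma contractVel_rank_zero (T : Tens D 0) (q v : Vec D) : contractVel T q v = T q ![] := by
  simp [contractVel, Subsingleton.elim _ ![]]

lemma dirContractVel_rank_zero (T : Tens D 0) (q v w : Vec D) : dirContractVel T q v w = 0 := by
  simp [dirContractVel]

lemma dirContractVel_rank_one (T : Tens D 1) (q v w : Vec D) :
    dirContractVel T q v w = ∑ c, T q (fun _ => c) * w c := by
  rw [dirContractVel, ← (Equiv.funUnique (Fin 1) (Fin D)).symm.sum_comp]
  simp only [Equiv.funUnique, Equiv.piUnique_symm_apply, univ_unique, Fin.default_eq_zero,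
    sum_singleton, erase_singleton, prod_empty, mul_one]
  rfl

lemma sum_comp_perm (σ : Equiv.Perm (Fin r)) (F : (Fin r → Fin D) → ℝ) :
    ∑ idx, F (idx ∘ σ) = ∑ idx, F idx :=
  Fintype.sum_equiv (σ.symm.arrowCongr (Equiv.refl _)) _ _ fun _ => rfl

lemma sum_mul_comp_perm_of_isSymTens {T : Tens D r} (hT : IsSymTens T) (q : Vec D)
    (σ : Equiv.Perm (Fin r)) (F : (Fin r → Fin D) → ℝ) :
    ∑ idx, T q idx * F (idx ∘ σ) = ∑ idx, T q idx * F idx := by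
  calc ∑ idx, T q idx * F (idx ∘ σ) = ∑ idx, T q (idx ∘ σ) * F (idx ∘ σ) :=
        sum_congr rfl fun idx _ => by rw [hT]
    _ = _ := sum_comp_perm σ fun idx => T q idx * F idx

lemma contractVel_symT (T : Tens D r) (q v : Vec D) :
    contractVel (symT T) q v = contractVel T q v := by
  have hσ : ∀ σ : Equiv.Perm (Fin r),
      ∑ idx : Fin r → Fin D, T q (idx ∘ σ) * ∏ k, v (idx k) = contractVel T q v := fun σ => by
    rw [contractVel, ← sum_comp_perm σ fun idx => T q idx * ∏ k, v (idx k)]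
    exact sum_congr rfl fun idx _ => by rw [Function.comp_def, Equiv.prod_comp σ fun k => v (idx k)]
  simp only [contractVel, symT, mul_assoc, sum_mul, ← mul_sum]
  rw [sum_comm]
  simp only [hσ, sum_const, card_univ, Fintype.card_perm, Fintype.card_fin, nsmul_eq_mul]
  rw [inv_mul_cancel_left₀ (Nat.cast_ne_zero.2 r.factorial_ne_zero), contractVel]

lemma sum_snoc (F : (Fin (r + 1) → Fin D) → ℝ) :
    ∑ idx, F idx = ∑ g : Fin r → Fin D, ∑ j, F (Fin.snoc g j) := by
  rw [← (Fin.snocEquiv fun _ => Fin D).sum_comp, Fintype.sum_prod_type_right]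
  rfl

lemma prod_erase_last (f : Fin (r + 1) → ℝ) :
    ∏ l ∈ univ.erase (Fin.last r), f l = ∏ k : Fin r, f k.castSucc := by
  have : univ.erase (Fin.last r) = univ.map Fin.castSuccEmb := by
    ext l
    simp [Fin.exists_castSucc_eq]
  rw [this, prod_map]
  rfl

lemma prod_erase_comp_perm (σ : Equiv.Perm (Fin r)) (a : Fin r) (v : Vec D)
    (idx : Fin r → Fin D) :
    ∏ l ∈ univ.erase a, v (idx (σ l)) = ∏ l ∈ univ.erase (σ a), v (idx l) := calc
  _ = ∏ l ∈ (univ.erase a).map σ.toEmbedding, v (idx l) := (prod_map _ _ _).symm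
  _ = _ := by rw [map_erase, map_univ_equiv]; rfl

lemma dirContractVel_eq_of_isSymTens {T : Tens D (r + 1)} (hT : IsSymTens T)
    (Q : Vec D → Fin D → ℝ) (q v : Vec D) :
    dirContractVel T q v (Q q) = (r + 1) * contractVel (contractLast T Q) q v := by
  set F : (Fin (r + 1) → Fin D) → ℝ :=
    fun idx => Q q (idx (Fin.last r)) * ∏ l ∈ univ.erase (Fin.last r), v (idx l)
  have hk : ∀ k, ∑ idx, T q idx * (Q q (idx k) * ∏ l ∈ univ.erase k, v (idx l))
      = contractVel (contractLast T Q) q v := fun k => calc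
    _ = ∑ idx, T q idx * F (idx ∘ Equiv.swap k (Fin.last r)) := by
      simp only [F, Function.comp_apply, prod_erase_comp_perm, Equiv.swap_apply_right]
    _ = ∑ idx, T q idx * F idx := sum_mul_comp_perm_of_isSymTens hT q _ F
    _ = contractVel (contractLast T Q) q v := by
      simp only [sum_snoc, F, contractVel, contractLast, Fin.snoc_last, prod_erase_last,
        Fin.snoc_castSucc, sum_mul]
      exact sum_congr rfl fun g _ => sum_congr rfl fun j _ => by ring
  simp only [dirContractVel, mul_sum]
  rw [sum_comm]
  simp only [hk, sum_const, card_univ, Fintype.card_fin, nsmul_eq_mul]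
  push_cast
  ring

lemma prod_apply_update (v : Vec D) (g : Fin r → Fin D) (k : Fin r) (s : Fin D) :
    ∏ l, v (Function.update g k s l) = v s * ∏ l ∈ univ.erase k, v (g l) := by
  rw [← mul_prod_erase univ _ (mem_univ k), Function.update_self]
  congr 1
  exact prod_congr rfl fun l hl => by rw [Function.update_of_ne (ne_of_mem_erase hl)]

lemma sum_sum_update (k : Fin r) (Φ : (Fin r → Fin D) → Fin D → ℝ) :
    ∑ g, ∑ s, Φ (Function.update g k s) (g k) = ∑ g, ∑ s, Φ g s := by
  let e : Equiv.Perm ((Fin r → Fin D) × Fin D) :=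
    Function.Involutive.toPerm
      (fun p : (Fin r → Fin D) × Fin D => (Function.update p.1 k p.2, p.1 k)) fun p => by simp
  have h := Equiv.sum_comp e fun p => Φ p.1 p.2
  rw [Fintype.sum_prod_type, Fintype.sum_prod_type] at h
  exact h

lemma contractVel_covTens (Γ : Conn D) (T : Tens D r) (q v : Vec D) :
    contractVel (covTens Γ T) q v =
      ∑ idx, (∑ j, v j * pd j (fun p => T p idx) q) * ∏ k, v (idx k)
        - dirContractVel T q v fun a => ∑ b, ∑ c, Γ q a b c * v b * v c := by
  have hk : ∀ k j, ∑ g : Fin r → Fin D, ∑ s,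
      Γ q s (g k) j * T q (Function.update g k s) * ((∏ l, v (g l)) * v j)
        = ∑ g, T q g * (∑ s, Γ q (g k) s j * v s * v j) * ∏ l ∈ univ.erase k, v (g l) := by
    intro k j
    have := sum_sum_update k fun g s =>
      Γ q (g k) s j * T q g * ((∏ l, v (Function.update g k s l)) * v j)
    simp only [Function.update_self, Function.update_idem, Function.update_eq_self] at this
    rw [this]
    simp only [prod_apply_update, mul_sum, sum_mul]
    exact sum_congr rfl fun g _ => sum_congr rfl fun s _ => by ring
  simp only [contractVel, covTens, dirContractVel, sum_snoc, Fin.snoc_last, Fin.snoc_castSucc,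
    Fin.prod_univ_castSucc, sub_mul, sum_sub_distrib]
  congr 1
  · exact sum_congr rfl fun g _ => by rw [sum_mul]; exact sum_congr rfl fun j _ => by ring
  · calc _ = ∑ g : Fin r → Fin D, ∑ k, ∑ j, ∑ s,
          Γ q s (g k) j * T q (Function.update g k s) * ((∏ l, v (g l)) * v j) := by
          refine sum_congr rfl fun g _ => ?_
          simp only [sum_mul]
          exact sum_comm
      _ = ∑ k, ∑ j, ∑ g : Fin r → Fin D, ∑ s,
          Γ q s (g k) j * T q (Function.update g k s) * ((∏ l, v (g l)) * v j) := by
          rw [sum_comm]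
          exact sum_congr rfl fun k _ => sum_comm
      _ = _ := by
          rw [sum_congr rfl fun k _ => sum_congr rfl fun j _ => hk k j,
            sum_congr rfl fun k _ => sum_comm, sum_comm]
          refine sum_congr rfl fun g _ => ?_
          rw [mul_sum]
          refine sum_congr rfl fun k _ => ?_
          rw [← sum_mul, ← mul_sum, sum_comm, mul_assoc]

end Contraction

section Dynamics

variable {D r : ℕ}

lemma dirContractVel_neg_sub (T : Tens D r) (q v w₁ w₂ : Vec D) :
    dirContractVel T q v (fun a => -w₁ a - w₂ a)
      = -dirContractVel T q v w₁ - dirContractVel T q v w₂ := by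
  simp only [dirContractVel, neg_mul, sub_mul, sum_sub_distrib, sum_neg_distrib, mul_sub,
    mul_neg]

lemma hasDerivAt_comp_curve {F : Vec D → ℝ} {γ : ℝ → Vec D} {γ' : Vec D} {t : ℝ}
    (hF : DifferentiableAt ℝ F (γ t)) (hγ : HasDerivAt γ γ' t) :
    HasDerivAt (fun τ => F (γ τ)) (∑ j, γ' j * pd j F (γ t)) t := by
  refine (hF.hasFDerivAt.comp_hasDerivAt t hγ).congr_deriv ?_
  conv_lhs => rw [← univ_sum_single γ', map_sum]
  refine sum_congr rfl fun j _ => ?_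
  rw [pd, ← smul_eq_mul, ← map_smul, ← Pi.single_smul', smul_eq_mul, mul_one]

lemma hasDerivAt_contractVel {T : Tens D r} (hT : ∀ idx, Differentiable ℝ fun p => T p idx)
    {q v : ℝ → Vec D} {a : Vec D} {t : ℝ} (hq : HasDerivAt q (v t) t) (hv : HasDerivAt v a t) :
    HasDerivAt (fun τ => contractVel T (q τ) (v τ))
      ((∑ idx, (∑ j, v t j * pd j (fun p => T p idx) (q t)) * ∏ k, v t (idx k))
        + dirContractVel T (q t) (v t) a) t := by
  have h := HasDerivAt.fun_sum fun idx (_ : idx ∈ univ) =>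
    (hasDerivAt_comp_curve (hT idx _) hq).mul
      (HasDerivAt.fun_finsetProd fun k (_ : k ∈ univ) => hasDerivAt_pi.1 hv (idx k))
  refine h.congr_deriv ?_
  simp only [dirContractVel, ← sum_add_distrib, smul_eq_mul, mul_comm]

lemma hasDerivAt_contractVel_of_isSolutionOn {Γ : Conn D} {Q : Vec D → Fin D → ℝ}
    {s : Set ℝ} {q v : ℝ → Vec D} (hsol : IsSolutionOn Γ Q s q v) {t : ℝ} (ht : t ∈ s)
    {T : Tens D r} (hT : ∀ idx, Differentiable ℝ fun p => T p idx) :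
    HasDerivAt (fun τ => contractVel T (q τ) (v τ))
      (contractVel (covTens Γ T) (q t) (v t) - dirContractVel T (q t) (v t) (Q (q t))) t := by
  refine (hasDerivAt_contractVel hT (hasDerivAt_pi.2 fun a => (hsol t ht a).1)
    (hasDerivAt_pi.2 fun a => (hsol t ht a).2)).congr_deriv ?_
  rw [contractVel_covTens, dirContractVel_neg_sub]
  ring

end Dynamics

section SumIdentities

lemma sum_mul_pow_pred (m : ℕ) (t : ℝ) (X : ℕ → ℝ) :
    ∑ M ∈ range (m + 1), (M : ℝ) * t ^ (M - 1) * X M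
      = ∑ M ∈ range m, ((M : ℝ) + 1) * t ^ M * X (M + 1) := by
  rw [sum_range_succ']
  simp

lemma sum_range_sub_two (n : ℕ) (f : ℕ → ℝ) :
    ∑ r ∈ range (n + 1), (f (r + 2) - f r) = f (n + 1) + f (n + 2) - f 0 - f 1 := by
  have h := sum_range_sub (fun r => f r + f (r + 1)) (n + 1)
  rw [sub_sub, ← h]
  exact sum_congr rfl fun r _ => by ring_nf

-- The `p`-terms telescope in `r` (in steps of two) and the `c`-terms in `M`; `hc0` matches what
-- is left of the former with the derivatives of the rank-0 terms `t ^ M * c M 0`.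
lemma sum_ladder_eq_zero (m n : ℕ) (t : ℝ) (c p d : ℕ → ℕ → ℝ)
    (hd : ∀ M ≤ m, ∀ r ≤ n, d M r = p M (r + 2) - (M + 1) * c (M + 1) (r + 1))
    (hc0 : ∀ M : ℕ, ((M : ℝ) + 1) * c (M + 1) 0 = p M 1)
    (hp0 : ∀ M, p M 0 = 0) (hpn : ∀ M, p M (n + 1) = 0 ∧ p M (n + 2) = 0)
    (hcm : ∀ r, c (m + 1) r = 0) (hcn : ∀ M, c M (n + 1) = 0) :
    ∑ M ∈ range (m + 1), ∑ r ∈ range (n + 1),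
      ((M : ℝ) * t ^ (M - 1) * c M r + t ^ M * (d M r - p M r)) = 0 := by
  set C : ℕ → ℝ := fun M => ∑ r ∈ range n, c M (r + 1)
  have hrow : ∀ M ≤ m, ∑ r ∈ range (n + 1),
      ((M : ℝ) * t ^ (M - 1) * c M r + t ^ M * (d M r - p M r))
        = (M : ℝ) * t ^ (M - 1) * c M 0 + (M : ℝ) * t ^ (M - 1) * C M - t ^ M * p M 1
          - ((M : ℝ) + 1) * t ^ M * C (M + 1) := by
    intro M hM
    have hsum := sum_range_sub_two n (p M)
    rw [hp0, (hpn M).1, (hpn M).2] at hsum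
    have hc := sum_range_succ (fun r => c (M + 1) (r + 1)) n
    rw [hcn] at hc
    have hc' := sum_range_succ' (c M) n
    have hexp : ∑ r ∈ range (n + 1),
        ((M : ℝ) * t ^ (M - 1) * c M r + t ^ M * (d M r - p M r))
          = (M : ℝ) * t ^ (M - 1) * ∑ r ∈ range (n + 1), c M r
            + t ^ M * ∑ r ∈ range (n + 1), (p M (r + 2) - p M r)
            - ((M : ℝ) + 1) * t ^ M * ∑ r ∈ range (n + 1), c (M + 1) (r + 1) := by
      simp only [mul_sum, ← sum_add_distrib, ← sum_sub_distrib]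
      refine sum_congr rfl fun r hr => ?_
      rw [hd M hM r (Nat.lt_succ_iff.1 (mem_range.1 hr))]
      ring
    simp only [C]
    linear_combination
      hexp + (M : ℝ) * t ^ (M - 1) * hc' + t ^ M * hsum - ((M : ℝ) + 1) * t ^ M * hc
  have hpm : p m 1 = 0 := by rw [← hc0, hcm, mul_zero]
  have hCm : C (m + 1) = 0 := sum_eq_zero fun r _ => hcm (r + 1)
  have hc0' : ∑ M ∈ range m, ((M : ℝ) + 1) * t ^ M * c (M + 1) 0 = ∑ M ∈ range m, t ^ M * p M 1 :=
    sum_congr rfl fun M _ => by rw [← hc0]; ring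
  rw [sum_congr rfl fun M hM => hrow M (Nat.lt_succ_iff.1 (mem_range.1 hM))]
  simp only [sum_sub_distrib, sum_add_distrib, sum_mul_pow_pred]
  rw [sum_range_succ (fun M => t ^ M * p M 1),
    sum_range_succ (fun M => ((M : ℝ) + 1) * t ^ M * C (M + 1)), hpm, hCm, hc0']
  ring

lemma sum_range_two_mul_add_one (n : ℕ) (f : ℕ → ℝ) :
    ∑ i ∈ range (2 * n + 1), f i = f 0 + ∑ j ∈ range n, (f (2 * j + 1) + f (2 * j + 2)) := by
  induction n with
  | zero => simp
  | succ n ih =>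
    rw [show 2 * (n + 1) + 1 = 2 * n + 1 + 1 + 1 by ring, sum_range_succ, sum_range_succ, ih,
      sum_range_succ]
    ring

lemma sum_Icc_one_eq_sum_range (n : ℕ) (f : ℕ → ℝ) :
    ∑ N ∈ Icc 1 n, f N = ∑ k ∈ range n, f (k + 1) := by
  rw [← Ico_add_one_right_eq_Icc, sum_Ico_eq_sum_range]
  simp [add_comm]

end SumIdentities

section Ladder

variable {D : ℕ}

def IsLadder (Γ : Conn D) (Q : Vec D → Fin D → ℝ) (L : ℕ → (r : ℕ) → Tens D r) (M r : ℕ) :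
    Prop :=
  ∀ q idx, symT (covTens Γ (L M r)) q idx =
    ((r : ℝ) + 2) * contractLast (L M (r + 2)) Q q idx - ((M : ℝ) + 1) * L (M + 1) (r + 1) q idx

lemma IsLadder.contractVel_covTens {Γ : Conn D} {Q : Vec D → Fin D → ℝ}
    {L : ℕ → (r : ℕ) → Tens D r} {M r : ℕ} (h : IsLadder Γ Q L M r)
    (hsym : IsSymTens (L M (r + 2))) (q v : Vec D) :
    contractVel (covTens Γ (L M r)) q v
      = dirContractVel (L M (r + 2)) q v (Q q)
        - ((M : ℝ) + 1) * contractVel (L (M + 1) (r + 1)) q v := by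
  rw [← contractVel_symT, dirContractVel_eq_of_isSymTens hsym]
  simp only [contractVel, h q, sub_mul, sum_sub_distrib, mul_assoc, ← mul_sum]
  push_cast
  ring

theorem firstIntegral_of_isLadder {Γ : Conn D} {Q : Vec D → Fin D → ℝ}
    {L : ℕ → (r : ℕ) → Tens D r} {m n : ℕ}
    (hdiff : ∀ M r idx, Differentiable ℝ fun q => L M r q idx)
    (hsym : ∀ M r, IsSymTens (L M r))
    (hlad : ∀ M ≤ m, ∀ r ≤ n, IsLadder Γ Q L M r)
    (hpot : ∀ (M : ℕ) q, ((M : ℝ) + 1) * L (M + 1) 0 q ![] = dotQ (L M 1) Q q)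
    (hvan : ∀ M r, m < M ∨ n < r → L M r = 0) :
    FirstIntegral Γ Q fun t q v =>
      ∑ M ∈ range (m + 1), ∑ r ∈ range (n + 1), t ^ M * contractVel (L M r) q v := by
  intro a b q v hsol t₁ ht₁ t₂ ht₂
  have hderiv : ∀ t ∈ Set.Ioo a b, HasDerivAt (fun τ =>
      ∑ M ∈ range (m + 1), ∑ r ∈ range (n + 1), τ ^ M * contractVel (L M r) (q τ) (v τ)) 0 t := by
    intro t ht
    have h := HasDerivAt.fun_sum fun M (_ : M ∈ range (m + 1)) =>
      HasDerivAt.fun_sum fun r (_ : r ∈ range (n + 1)) =>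
        (hasDerivAt_pow M t).mul (hasDerivAt_contractVel_of_isSolutionOn hsol ht (hdiff M r))
    refine h.congr_deriv (sum_ladder_eq_zero m n t _ _ _ ?_ ?_ ?_ ?_ ?_ ?_)
    · exact fun M hM r hr => (hlad M hM r hr).contractVel_covTens (hsym _ _) _ _
    · intro M
      simp [contractVel_rank_zero, dirContractVel_rank_one, hpot, dotQ]
    · exact fun M => dirContractVel_rank_zero _ _ _ _
    · intro M
      simp [hvan M (n + 1) (by omega), hvan M (n + 2) (by omega), dirContractVel]
    · intro r
      simp [hvan (m + 1) r (by omega), contractVel]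
    · intro M
      simp [hvan M (n + 1) (by omega), contractVel]
  exact isOpen_Ioo.is_const_of_deriv_eq_zero isPreconnected_Ioo
    (fun t ht => (hderiv t ht).differentiableAt.differentiableWithinAt)
    (fun t ht => (hderiv t ht).deriv) ht₁ ht₂

lemma FirstIntegral.congr {D : ℕ} {Γ : Conn D} {Q : Vec D → Fin D → ℝ}
    {I J : ℝ → Vec D → Vec D → ℝ} (hI : FirstIntegral Γ Q I) (h : ∀ t q v, I t q v = J t q v) :
    FirstIntegral Γ Q J := by
  intro a b q v hsol t₁ ht₁ t₂ ht₂
  rw [← h, ← h]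
  exact hI a b q v hsol t₁ ht₁ t₂ ht₂

end Ladder

section LadderCriteria

variable {D : ℕ} {Γ : Conn D} {Q : Vec D → Fin D → ℝ} {L : ℕ → (r : ℕ) → Tens D r} {M r : ℕ}

-- Lets a condition be applied with its own index expressions (such as `2 * (N + 1) - 1` for
-- `2 * N + 1`), which agree with those of `IsLadder` definitionally.
lemma isLadder_of_eq_coeff {a b : ℝ} (ha : a = r + 2) (hb : b = M + 1)
    (h : ∀ q idx, symT (covTens Γ (L M r)) q idx
      = a * contractLast (L M (r + 2)) Q q idx - b * L (M + 1) (r + 1) q idx) :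
    IsLadder Γ Q L M r := by
  subst ha hb
  exact h

lemma isLadder_of_eq_zero (h₀ : L M r = fun _ _ => 0) (h₂ : L M (r + 2) = fun _ _ => 0)
    (h₁ : L (M + 1) (r + 1) = fun _ _ => 0) : IsLadder Γ Q L M r := by
  intro q idx
  simp [h₀, h₁, h₂, symT, covTens, contractLast, pd]

lemma isLadder_of_isGenKT (hKT : IsGenKT Γ (L M r)) (h₂ : L M (r + 2) = fun _ _ => 0)
    (h₁ : L (M + 1) (r + 1) = fun _ _ => 0) : IsLadder Γ Q L M r := by
  intro q idx
  simp [hKT q idx, h₁, h₂, contractLast]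

end LadderCriteria

-- `potential L Q G M` is the coefficient of `t ^ M` in the velocity-free part of `J`.
def potential {D : ℕ} (L : ℕ → (r : ℕ) → Tens D r) (Q : Vec D → Fin D → ℝ) (G : Vec D → ℝ) :
    ℕ → Vec D → ℝ
  | 0 => G
  | M + 1 => fun q => dotQ (L M 1) Q q / (M + 1)

def withScalars {D : ℕ} (L : ℕ → (r : ℕ) → Tens D r) (φ : ℕ → Vec D → ℝ) : ℕ → (r : ℕ) → Tens D r
  | M, 0 => fun q _ => φ M q
  | M, r + 1 => L M (r + 1)

section Scalars

variable {D : ℕ} {Q : Vec D → Fin D → ℝ} {L : ℕ → (r : ℕ) → Tens D r} {G : Vec D → ℝ}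

lemma pd_div_const (j : Fin D) (f : Vec D → ℝ) (c : ℝ) (q : Vec D) :
    pd j (fun p => f p / c) q = pd j f q / c := by
  have : (fun p => f p / c) = c⁻¹ • f := funext fun p => by simp [div_eq_inv_mul]
  rw [pd, this, fderiv_const_smul_field, pd, div_eq_inv_mul]
  rfl

lemma isLadder_withScalars_zero {Γ : Conn D} {M : ℕ} {φ : ℕ → Vec D → ℝ}
    (h : ∀ q (i : Fin D), pd i (φ M) q
      = 2 * (∑ j, L M 2 q ![i, j] * Q q j) - ((M : ℝ) + 1) * L (M + 1) 1 q fun _ => i) :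
    IsLadder Γ Q (withScalars L φ) M 0 := by
  intro q idx
  obtain ⟨i, rfl⟩ : ∃ i, idx = fun _ => i := ⟨idx 0, funext fun k => by rw [Fin.fin_one_eq_zero k]⟩
  have hsnoc : ∀ j, (Fin.snoc (fun _ => i) j : Fin 2 → Fin D) = ![i, j] := fun j => by
    ext k; fin_cases k <;> rfl
  simp [symT, covTens, withScalars, contractLast, hsnoc, h]

lemma potential_two_mul {N : ℕ} (hN : 1 ≤ N) :
    potential L Q G (2 * N) = fun q => dotQ (L (2 * N - 1) 1) Q q / (2 * N) := by
  obtain ⟨k, rfl⟩ : ∃ k, N = k + 1 := ⟨N - 1, by omega⟩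
  funext q
  simp only [show 2 * (k + 1) = 2 * k + 1 + 1 by ring, potential, Nat.add_sub_cancel]
  push_cast
  ring

lemma mul_potential_succ (M : ℕ) (q : Vec D) :
    ((M : ℝ) + 1) * withScalars L (potential L Q G) (M + 1) 0 q ![] = dotQ (L M 1) Q q := by
  simp only [withScalars, potential]
  field_simp

lemma isSymTens_withScalars (hsym : ∀ M r, IsSymTens (L M r)) (φ : ℕ → Vec D → ℝ) (M r : ℕ) :
    IsSymTens (withScalars L φ M r) := by
  cases r with
  | zero => exact fun _ _ _ => rfl
  | succ r => exact hsym M (r + 1)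

lemma differentiable_withScalars_potential (hL : ∀ M r, SmoothTens (L M r))
    (hQ : ∀ a, ContDiff ℝ (⊤ : ℕ∞) fun q => Q q a) (hG : ContDiff ℝ (⊤ : ℕ∞) G) (M r : ℕ)
    (idx : Fin r → Fin D) :
    Differentiable ℝ fun q => withScalars L (potential L Q G) M r q idx := by
  rcases r with _ | r
  · rcases M with _ | M
    · exact hG.differentiable (by simp)
    · have hdot : ContDiff ℝ (⊤ : ℕ∞) (dotQ (L M 1) Q) :=
        ContDiff.sum fun c _ => (hL M 1 _).mul (hQ c)
      exact (hdot.div_const _).differentiable (by simp)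
  · exact (hL M (r + 1) idx).differentiable (by simp)

lemma sum_mul_prod_eq_sum_contractVel {r : ℕ} (s : Finset ℕ) (a : ℕ → ℝ) (T : ℕ → Tens D r)
    (q v : Vec D) :
    ∑ idx : Fin r → Fin D, (∑ N ∈ s, a N * T N q idx) * ∏ k, v (idx k)
      = ∑ N ∈ s, a N * contractVel (T N) q v := by
  simp only [contractVel, sum_mul, mul_sum, mul_assoc]
  exact sum_comm

lemma sum_withScalars_potential (ν ℓ : ℕ) (hpar : ∀ N r, N % 2 ≠ r % 2 → L N r = fun _ _ => 0)
    (t : ℝ) (q v : Vec D) :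
    ∑ M ∈ range (2 * ℓ + 1), ∑ r ∈ range (2 * ν + 1),
        t ^ M * contractVel (withScalars L (potential L Q G) M r) q v
      = (∑ j ∈ range ν, ∑ idx : Fin (2 * j + 1) → Fin D,
        (∑ N ∈ Icc 1 ℓ, t ^ (2 * N - 1) * L (2 * N - 1) (2 * j + 1) q idx) *
          ∏ k : Fin (2 * j + 1), v (idx k))
      + (∑ j ∈ range ν, ∑ idx : Fin (2 * j + 2) → Fin D,
        (∑ N ∈ range (ℓ + 1), t ^ (2 * N) * L (2 * N) (2 * j + 2) q idx) *
          ∏ k : Fin (2 * j + 2), v (idx k))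
      + (∑ N ∈ Icc 1 ℓ, dotQ (L (2 * N - 1) 1) Q q * t ^ (2 * N) / ((2 * N : ℕ) : ℝ))
      + G q := by
  have hc : ∀ N r, N % 2 ≠ r % 2 → contractVel (L N r) q v = 0 := fun N r h => by
    simp [hpar N r h, contractVel]
  have hdotQ : ∀ N, dotQ (L (2 * N) 1) Q q = 0 := fun N => by
    simp [dotQ, hpar (2 * N) 1 (by omega)]
  -- the rank is a dependent argument, out of reach of `simp`'s arithmetic
  have hrank : ∀ M j, contractVel (L M (2 * j + 1 + 1)) q v = contractVel (L M (2 * j + 2)) q v :=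
    fun _ _ => rfl
  simp only [sum_mul_prod_eq_sum_contractVel, sum_range_two_mul_add_one, withScalars,
    contractVel_rank_zero, sum_Icc_one_eq_sum_range]
  simp only [sum_range_succ' _ ℓ, mul_add, mul_one, hrank,
    show ∀ k, 2 * k + 2 - 1 = 2 * k + 1 by omega]
  have h₁ : ∀ j, contractVel (L 0 (2 * j + 1)) q v = 0 := fun j => hc _ _ (by omega)
  have h₂ : ∀ k j, contractVel (L (2 * k + 1) (2 * j + 2)) q v = 0 := fun k j => hc _ _ (by omega)
  have h₃ : ∀ k j, contractVel (L (2 * k + 2) (2 * j + 1)) q v = 0 := fun k j => hc _ _ (by omega)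
  simp only [potential, hdotQ, h₁, h₂, h₃, zero_div, mul_zero, add_zero, zero_add, sum_add_distrib,
    pow_zero, one_mul]
  have hC : ∀ k, t ^ (2 * k + 2) * (dotQ (L (2 * k + 1) 1) Q q / (((2 * k + 1 : ℕ) : ℝ) + 1))
      = dotQ (L (2 * k + 1) 1) Q q * t ^ (2 * k + 2) / ((2 * k + 2 : ℕ) : ℝ) := fun k => by
    push_cast
    ring
  simp only [hC, sum_comm (s := range ν) (t := range ℓ)]
  ring

end Scalars

structure CompleteFormConditions {D : ℕ} (ν ℓ : ℕ) (Γ : Conn D) (Q : Vec D → Fin D → ℝ)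
    (L : ℕ → (r : ℕ) → Tens D r) (G : Vec D → ℝ) : Prop where
  eq_zero : ∀ N r, r = 0 ∨ 2 * ν < r ∨ 2 * ℓ < N ∨ N % 2 ≠ r % 2 → L N r = fun _ _ => 0
  isGenKT_zero : IsGenKT Γ (L 0 (2 * ν))
  top : ∀ ν₀, ν = ν₀ + 1 → ∀ N, 1 ≤ N → N ≤ ℓ →
    (∀ q (idx : Fin (2 * ν₀ + 2) → Fin D),
      L (2 * N) (2 * ν₀ + 2) q idx =
        -(1 / (2 * (N : ℝ))) * symT (covTens Γ (L (2 * N - 1) (2 * ν₀ + 1))) q idx) ∧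
    IsGenKT Γ (L (2 * N) (2 * ν₀ + 2))
  pd_G : ∀ q (i : Fin D),
    pd i G q = 2 * (∑ j, L 0 2 q ![i, j] * Q q j) - L 1 1 q fun _ => i
  pd_dotQ : ∀ N, 1 ≤ N → N ≤ ℓ → ∀ q (i : Fin D),
    pd i (dotQ (L (2 * N - 1) 1) Q) q =
      4 * (N : ℝ) * (∑ j, L (2 * N) 2 q ![i, j] * Q q j)
        - 2 * (N : ℝ) * (2 * (N : ℝ) + 1) * L (2 * N + 1) 1 q fun _ => i
  covTens_odd : ∀ N, 1 ≤ N → N ≤ ℓ → ∀ i : ℕ, 2 * i + 4 ≤ 2 * ν →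
    ∀ q (idx : Fin (2 * i + 2) → Fin D),
      symT (covTens Γ (L (2 * N - 1) (2 * i + 1))) q idx =
        ((2 * i + 3 : ℕ) : ℝ) * (∑ j, L (2 * N - 1) (2 * i + 3) q (Fin.snoc idx j) * Q q j)
          - 2 * (N : ℝ) * L (2 * N) (2 * i + 2) q idx
  covTens_even : ∀ N, N ≤ ℓ → ∀ i : ℕ, 2 * i + 4 ≤ 2 * ν →
    ∀ q (idx : Fin (2 * i + 3) → Fin D),
      symT (covTens Γ (L (2 * N) (2 * i + 2))) q idx =
        ((2 * i + 4 : ℕ) : ℝ) * (∑ j, L (2 * N) (2 * i + 4) q (Fin.snoc idx j) * Q q j)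
          - (2 * (N : ℝ) + 1) * L (2 * N + 1) (2 * i + 3) q idx

namespace CompleteFormConditions

variable {D ν ℓ : ℕ} {Γ : Conn D} {Q : Vec D → Fin D → ℝ} {L : ℕ → (r : ℕ) → Tens D r}
  {G : Vec D → ℝ}

lemma isLadder_odd (h : CompleteFormConditions ν ℓ Γ Q L G) {N i : ℕ} (hN : N < ℓ)
    (hi : 2 * i + 1 ≤ 2 * ν) : IsLadder Γ Q L (2 * N + 1) (2 * i + 1) := by
  by_cases hlow : 2 * i + 4 ≤ 2 * ν
  · refine isLadder_of_eq_coeff (a := ((2 * i + 3 : ℕ) : ℝ)) (b := 2 * ((N + 1 : ℕ) : ℝ))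
      (by push_cast; ring) (by push_cast; ring) fun q idx => ?_
    exact h.covTens_odd (N + 1) (by omega) hN i hlow q idx
  · obtain ⟨hrec, -⟩ := h.top i (by omega) (N + 1) (by omega) hN
    refine isLadder_of_eq_coeff rfl (b := 2 * ((N + 1 : ℕ) : ℝ)) (by push_cast; ring)
      fun q idx => ?_
    have hL : L (2 * N + 1 + 1) (2 * i + 1 + 1) q idx
        = -(1 / (2 * ((N + 1 : ℕ) : ℝ))) * symT (covTens Γ (L (2 * N + 1) (2 * i + 1))) q idx :=
      hrec q idx
    simp only [contractLast, h.eq_zero (2 * N + 1) (2 * i + 1 + 2) (by omega), zero_mul,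
      sum_const_zero, mul_zero, zero_sub, hL]
    field_simp

lemma isLadder_even (h : CompleteFormConditions ν ℓ Γ Q L G) {N i : ℕ} (hN : N ≤ ℓ)
    (hi : 2 * i + 2 ≤ 2 * ν) : IsLadder Γ Q L (2 * N) (2 * i + 2) := by
  by_cases hlow : 2 * i + 4 ≤ 2 * ν
  · refine isLadder_of_eq_coeff (a := ((2 * i + 4 : ℕ) : ℝ)) (b := 2 * (N : ℝ) + 1)
      (by push_cast; ring) (by push_cast; ring) fun q idx => ?_
    exact h.covTens_even N hN i hlow q idx
  · have hν : ν = i + 1 := by omega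
    refine isLadder_of_isGenKT ?_ (h.eq_zero _ _ (by omega)) (h.eq_zero _ _ (by omega))
    rcases Nat.eq_zero_or_pos N with rfl | hN1
    · subst hν
      exact h.isGenKT_zero
    · exact (h.top i hν N hN1 hN).2

lemma isLadder_pos (h : CompleteFormConditions ν ℓ Γ Q L G) {M r : ℕ} (hM : M ≤ 2 * ℓ)
    (hr₀ : 1 ≤ r) (hr : r ≤ 2 * ν) : IsLadder Γ Q L M r := by
  rcases Nat.even_or_odd' M with ⟨N, rfl | rfl⟩ <;> rcases Nat.even_or_odd' r with ⟨i, rfl | rfl⟩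
  · obtain ⟨i, rfl⟩ : ∃ i', i = i' + 1 := ⟨i - 1, by omega⟩
    exact h.isLadder_even (by omega) (by omega)
  · exact isLadder_of_eq_zero (h.eq_zero _ _ (by omega)) (h.eq_zero _ _ (by omega))
      (h.eq_zero _ _ (by omega))
  · exact isLadder_of_eq_zero (h.eq_zero _ _ (by omega)) (h.eq_zero _ _ (by omega))
      (h.eq_zero _ _ (by omega))
  · exact h.isLadder_odd (by omega) hr

lemma isLadder_withScalars_potential (h : CompleteFormConditions ν ℓ Γ Q L G) :
    ∀ M ≤ 2 * ℓ, ∀ r ≤ 2 * ν, IsLadder Γ Q (withScalars L (potential L Q G)) M r := by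
  intro M hM r hr
  rcases r with _ | r
  · refine isLadder_withScalars_zero fun q i => ?_
    rcases Nat.even_or_odd' M with ⟨N, rfl | rfl⟩
    · rcases Nat.eq_zero_or_pos N with rfl | hN
      · simpa [potential] using h.pd_G q i
      · rw [potential_two_mul hN, pd_div_const, h.pd_dotQ N hN (by omega) q i]
        push_cast
        field_simp
        ring
    · simp [potential, dotQ, pd, h.eq_zero (2 * N) 1 (by omega), h.eq_zero (2 * N + 1) 2 (by omega),
        h.eq_zero (2 * N + 1 + 1) 1 (by omega)]
  · exact h.isLadder_pos hM (by omega) hr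

lemma withScalars_potential_eq_zero (h : CompleteFormConditions ν ℓ Γ Q L G) (M r : ℕ)
    (hMr : 2 * ℓ < M ∨ 2 * ν < r) : withScalars L (potential L Q G) M r = 0 := by
  rcases r with _ | r
  · obtain ⟨M, rfl⟩ : ∃ M', M = M' + 1 := ⟨M - 1, by omega⟩
    funext q idx
    simp [withScalars, potential, dotQ, h.eq_zero M 1 (by omega)]
  · exact h.eq_zero M (r + 1) (by omega)

end CompleteFormConditions

/-- `L N r` represents `L_{(N)i₁...i_r}`; components outside the admissible ranges vanish,
which encodes the "present only if" conventions. -/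
theorem stmt7_general {D : ℕ} (ν ℓ : ℕ)
    (Γ : Conn D) (Q : Vec D → Fin D → ℝ)
    (hQ : ∀ a, ContDiff ℝ (⊤ : ℕ∞) fun q => Q q a)
    (L : ℕ → (r : ℕ) → Tens D r) (G : Vec D → ℝ)
    (hLsm : ∀ N r, SmoothTens (L N r))
    (hLsym : ∀ N r, IsSymTens (L N r))
    (hG : ContDiff ℝ (⊤ : ℕ∞) G)
    (hL0 : ∀ N r, r = 0 ∨ 2 * ν < r ∨ 2 * ℓ < N ∨ N % 2 ≠ r % 2 →
      L N r = fun _ _ => 0)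
    -- (i) `L_{(0)i₁...i_{2ν}}` is a (2ν)-th order generalized KT, and for `N = 1,…,ℓ`
    -- `L_{(2N)i₁...i_{2ν}} = −(1/(2N)) L_{(2N−1)(i₁...i_{2ν−1}|i_{2ν})}` are (2ν)-th order KTs
    (hKT0 : IsGenKT Γ (L 0 (2 * ν)))
    (hrec : ∀ ν₀, ν = ν₀ + 1 → ∀ N, 1 ≤ N → N ≤ ℓ →
      (∀ q (idx : Fin (2 * ν₀ + 2) → Fin D),
        L (2 * N) (2 * ν₀ + 2) q idx =
          -(1 / (2 * (N : ℝ))) * symT (covTens Γ (L (2 * N - 1) (2 * ν₀ + 1))) q idx) ∧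
      IsGenKT Γ (L (2 * N) (2 * ν₀ + 2)))
    -- (ii) `G_{,i₁} = 2 L_{(0)i₁i₂} Q^{i₂} − L_{(1)i₁}` (the last term only if `ℓ > 0`)
    (hGc : ∀ q (i : Fin D),
      pd i G q = 2 * (∑ j, L 0 2 q ![i, j] * Q q j) - L 1 1 q fun _ => i)
    -- (iii) `(L_{(2N−1)c}Q^c)_{,i₁} = 4N L_{(2N)i₁i₂}Q^{i₂} − 2N(2N+1) L_{(2N+1)i₁}`
    (hc1 : ∀ N, 1 ≤ N → N ≤ ℓ → ∀ q (i : Fin D),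
      pd i (dotQ (L (2 * N - 1) 1) Q) q =
        4 * (N : ℝ) * (∑ j, L (2 * N) 2 q ![i, j] * Q q j)
          - 2 * (N : ℝ) * (2 * (N : ℝ) + 1) * L (2 * N + 1) 1 q fun _ => i)
    -- (iv) for even ranks `r = 2i+2 ∈ {2,…,2ν−2}` and `N = 1,…,ℓ`
    (hc2 : ∀ N, 1 ≤ N → N ≤ ℓ → ∀ i : ℕ, 2 * i + 4 ≤ 2 * ν →
      ∀ q (idx : Fin (2 * i + 2) → Fin D),
        symT (covTens Γ (L (2 * N - 1) (2 * i + 1))) q idx =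
          ((2 * i + 3 : ℕ) : ℝ) * (∑ j, L (2 * N - 1) (2 * i + 3) q (Fin.snoc idx j) * Q q j)
            - 2 * (N : ℝ) * L (2 * N) (2 * i + 2) q idx)
    -- (v) for odd ranks `r = 2i+3 ∈ {3,…,2ν−1}` and `N = 0,…,ℓ`
    (hc3 : ∀ N, N ≤ ℓ → ∀ i : ℕ, 2 * i + 4 ≤ 2 * ν →
      ∀ q (idx : Fin (2 * i + 3) → Fin D),
        symT (covTens Γ (L (2 * N) (2 * i + 2))) q idx =
          ((2 * i + 4 : ℕ) : ℝ) * (∑ j, L (2 * N) (2 * i + 4) q (Fin.snoc idx j) * Q q j)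
            - (2 * (N : ℝ) + 1) * L (2 * N + 1) (2 * i + 3) q idx) :
    FirstIntegral Γ Q (fun t q v =>
      (∑ j ∈ Finset.range ν, ∑ idx : Fin (2 * j + 1) → Fin D,
        (∑ N ∈ Finset.Icc 1 ℓ, t ^ (2 * N - 1) * L (2 * N - 1) (2 * j + 1) q idx) *
          ∏ k : Fin (2 * j + 1), v (idx k))
      + (∑ j ∈ Finset.range ν, ∑ idx : Fin (2 * j + 2) → Fin D,
        (∑ N ∈ Finset.range (ℓ + 1), t ^ (2 * N) * L (2 * N) (2 * j + 2) q idx) *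
          ∏ k : Fin (2 * j + 2), v (idx k))
      + (∑ N ∈ Finset.Icc 1 ℓ, dotQ (L (2 * N - 1) 1) Q q * t ^ (2 * N) / ((2 * N : ℕ) : ℝ))
      + G q) := by
  have h : CompleteFormConditions ν ℓ Γ Q L G := ⟨hL0, hKT0, hrec, hGc, hc1, hc2, hc3⟩
  exact (firstIntegral_of_isLadder (m := 2 * ℓ) (n := 2 * ν)
    (differentiable_withScalars_potential hLsm hQ hG) (isSymTens_withScalars hLsym _)
    h.isLadder_withScalars_potential mul_potential_succ h.withScalars_potential_eq_zero).congr
    (sum_withScalars_potential ν ℓ fun N r hNr => hL0 N r (by omega))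

/-- complete form `J^{(2ν,1)}_ℓ`, even order `m = 2ν`.
`L N r` represents `L_{(N)i₁...i_r}`.  The admissible components are
`L_{(2N−1)}` at odd ranks `r ∈ {1,…,2ν−1}` with `1 ≤ N ≤ ℓ` and `L_{(2N)}` at
even ranks `r ∈ {2,…,2ν}` with `0 ≤ N ≤ ℓ`; all other components are absent,
i.e. vanish, which encodes the "present only if" conventions. -/
theorem stmt7 {D : ℕ} (ν ℓ : ℕ) (hν : 1 ≤ ν)
    (Γ : Conn D) (Q : Vec D → Fin D → ℝ)
    (hΓsym : ∀ q a b c, Γ q a b c = Γ q a c b)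
    (hΓ : ∀ a b c, ContDiff ℝ (⊤ : ℕ∞) fun q => Γ q a b c)
    (hQ : ∀ a, ContDiff ℝ (⊤ : ℕ∞) fun q => Q q a)
    (L : ℕ → (r : ℕ) → Tens D r) (G : Vec D → ℝ)
    (hLsm : ∀ N r, SmoothTens (L N r))
    (hLsym : ∀ N r, IsSymTens (L N r))
    (hG : ContDiff ℝ (⊤ : ℕ∞) G)
    (hL0 : ∀ N r, r = 0 ∨ 2 * ν < r ∨ 2 * ℓ < N ∨ N % 2 ≠ r % 2 →
      L N r = fun _ _ => 0)
    -- (i) `L_{(0)i₁...i_{2ν}}` is a (2ν)-th order generalized KT, and for `N = 1,…,ℓ`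
    -- `L_{(2N)i₁...i_{2ν}} = −(1/(2N)) L_{(2N−1)(i₁...i_{2ν−1}|i_{2ν})}` are (2ν)-th order KTs
    (hKT0 : IsGenKT Γ (L 0 (2 * ν)))
    (hrec : ∀ ν₀, ν = ν₀ + 1 → ∀ N, 1 ≤ N → N ≤ ℓ →
      (∀ q (idx : Fin (2 * ν₀ + 2) → Fin D),
        L (2 * N) (2 * ν₀ + 2) q idx =
          -(1 / (2 * (N : ℝ))) * symT (covTens Γ (L (2 * N - 1) (2 * ν₀ + 1))) q idx) ∧
      IsGenKT Γ (L (2 * N) (2 * ν₀ + 2)))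
    -- (ii) `G_{,i₁} = 2 L_{(0)i₁i₂} Q^{i₂} − L_{(1)i₁}` (the last term only if `ℓ > 0`)
    (hGc : ∀ q (i : Fin D),
      pd i G q = 2 * (∑ j, L 0 2 q ![i, j] * Q q j) - L 1 1 q fun _ => i)
    -- (iii) `(L_{(2N−1)c}Q^c)_{,i₁} = 4N L_{(2N)i₁i₂}Q^{i₂} − 2N(2N+1) L_{(2N+1)i₁}`
    (hc1 : ∀ N, 1 ≤ N → N ≤ ℓ → ∀ q (i : Fin D),
      pd i (dotQ (L (2 * N - 1) 1) Q) q =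
        4 * (N : ℝ) * (∑ j, L (2 * N) 2 q ![i, j] * Q q j)
          - 2 * (N : ℝ) * (2 * (N : ℝ) + 1) * L (2 * N + 1) 1 q fun _ => i)
    -- (iv) for even ranks `r = 2i+2 ∈ {2,…,2ν−2}` and `N = 1,…,ℓ`
    (hc2 : ∀ N, 1 ≤ N → N ≤ ℓ → ∀ i : ℕ, 2 * i + 4 ≤ 2 * ν →
      ∀ q (idx : Fin (2 * i + 2) → Fin D),
        symT (covTens Γ (L (2 * N - 1) (2 * i + 1))) q idx =
          ((2 * i + 3 : ℕ) : ℝ) * (∑ j, L (2 * N - 1) (2 * i + 3) q (Fin.snoc idx j) * Q q j)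
            - 2 * (N : ℝ) * L (2 * N) (2 * i + 2) q idx)
    -- (v) for odd ranks `r = 2i+3 ∈ {3,…,2ν−1}` and `N = 0,…,ℓ`
    (hc3 : ∀ N, N ≤ ℓ → ∀ i : ℕ, 2 * i + 4 ≤ 2 * ν →
      ∀ q (idx : Fin (2 * i + 3) → Fin D),
        symT (covTens Γ (L (2 * N) (2 * i + 2))) q idx =
          ((2 * i + 4 : ℕ) : ℝ) * (∑ j, L (2 * N) (2 * i + 4) q (Fin.snoc idx j) * Q q j)
            - (2 * (N : ℝ) + 1) * L (2 * N + 1) (2 * i + 3) q idx) :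
    FirstIntegral Γ Q (fun t q v =>
      (∑ j ∈ Finset.range ν, ∑ idx : Fin (2 * j + 1) → Fin D,
        (∑ N ∈ Finset.Icc 1 ℓ, t ^ (2 * N - 1) * L (2 * N - 1) (2 * j + 1) q idx) *
          ∏ k : Fin (2 * j + 1), v (idx k))
      + (∑ j ∈ Finset.range ν, ∑ idx : Fin (2 * j + 2) → Fin D,
        (∑ N ∈ Finset.range (ℓ + 1), t ^ (2 * N) * L (2 * N) (2 * j + 2) q idx) *
          ∏ k : Fin (2 * j + 2), v (idx k))
      + (∑ N ∈ Finset.Icc 1 ℓ, dotQ (L (2 * N - 1) 1) Q q * t ^ (2 * N) / ((2 * N : ℕ) : ℝ))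
      + G q) :=
  stmt7_general ν ℓ Γ Q hQ L G hLsm hLsym hG hL0 hKT0 hrec hGc hc1 hc2 hc3
end
end

section
/- (Proposition on Riemannian connections, case 2.) Let I₁, I₂ ⊆ ℝ be open intervals, f : I₁ → ℝ smooth with f(x) > 0, and h : I₂ → ℝ smooth with h(y) ≠ 0. Consider the symmetric connection on U = I₁ × I₂ whose only nonzero coefficients are Γ¹₁₁ = f'(x)/(2f(x)) and Γ²₂₂ = h'(y)/h(y). Then the symmetric matrix field γ_{ab} = [[f(x), h(y)√f(x)],[h(y)√f(x), 0]] is covariantly constant with respect to this connection and satisfies det[γ_{ab}] = −h(y)² f(x) ≠ 0 on U; hence the connection is Riemannian with kinetic metric γ_{ab}. -/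
noncomputable section
open scoped BigOperators

/-- Partial derivative `∂f/∂x` on `ℝ²`. -/
def pdx (f : ℝ × ℝ → ℝ) (z : ℝ × ℝ) : ℝ := fderiv ℝ f z (1, 0)

/-- Partial derivative `∂f/∂y` on `ℝ²`. -/
def pdy (f : ℝ × ℝ → ℝ) (z : ℝ × ℝ) : ℝ := fderiv ℝ f z (0, 1)

/-- Partial derivative `∂f/∂q^c` on `ℝ²`, `c : Fin 2`. -/
def pd2 (c : Fin 2) (f : ℝ × ℝ → ℝ) (z : ℝ × ℝ) : ℝ :=
  if c = 0 then pdx f z else pdy f z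

/-- The symmetric connection on `ℝ²` whose only (possibly) nonzero
coefficients are `Γ¹₁₁ = G1` and `Γ²₂₂ = G2`. -/
def conn2 (G1 G2 : ℝ × ℝ → ℝ) (z : ℝ × ℝ) (a b c : Fin 2) : ℝ :=
  if a = 0 ∧ b = 0 ∧ c = 0 then G1 z
  else if a = 1 ∧ b = 1 ∧ c = 1 then G2 z else 0

/-- `γ_{ab}` is covariantly constant on `U` with respect to `conn2 G1 G2`:
`γ_{ab,c} − γ_{db}Γ^d_{ac} − γ_{ad}Γ^d_{bc} = 0`. -/
def CovConstOn (G1 G2 : ℝ × ℝ → ℝ) (γ : ℝ × ℝ → Fin 2 → Fin 2 → ℝ)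
    (U : Set (ℝ × ℝ)) : Prop :=
  ∀ z ∈ U, ∀ a b c : Fin 2,
    pd2 c (fun w => γ w a b) z
      - (∑ d, γ z d b * conn2 G1 G2 z d a c)
      - (∑ d, γ z a d * conn2 G1 G2 z d b c) = 0

/-- `γ_{ab}` is a kinetic metric on `U` for the connection `conn2 G1 G2`:
a smooth symmetric covariantly constant matrix field with nonzero determinant.
The connection is *Riemannian* on `U` iff such a `γ` exists. -/
def IsKineticMetricOn (G1 G2 : ℝ × ℝ → ℝ) (γ : ℝ × ℝ → Fin 2 → Fin 2 → ℝ)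
    (U : Set (ℝ × ℝ)) : Prop :=
  (∀ a b, ContDiffOn ℝ (⊤ : ℕ∞) (fun z => γ z a b) U) ∧
  (∀ z a b, γ z a b = γ z b a) ∧
  CovConstOn G1 G2 γ U ∧
  ∀ z ∈ U, γ z 0 0 * γ z 1 1 - γ z 0 1 * γ z 1 0 ≠ 0

/-!
For a connection whose only coefficients are `Γ¹₁₁ = G1` and `Γ²₂₂ = G2`, covariant constancy of a
symmetric `γ` reads `∂_c γ_ab = (δ_ac Γ^a_aa + δ_bc Γ^b_bb) γ_ab`. For `γ = [[f, h√f], [h√f, 0]]`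
these equations are `f' = 2 Γ¹₁₁ f`, `∂ₓ(h√f) = Γ¹₁₁ h√f` and `∂_y(h√f) = Γ²₂₂ h√f`, which hold
exactly because `Γ¹₁₁ = f'/(2f)` and `Γ²₂₂ = h'/h` (using `√f · √f = f`). The determinant is
`-h²f`, nonzero since `f > 0` and `h ≠ 0`.
-/

theorem covDeriv_conn2_eq_zero_of_symm {G1 G2 : ℝ × ℝ → ℝ} {γ : ℝ × ℝ → Fin 2 → Fin 2 → ℝ}
    {z : ℝ × ℝ} (hsymm : ∀ w, γ w 1 0 = γ w 0 1)
    (h00 : pdx (fun w => γ w 0 0) z = 2 * G1 z * γ z 0 0 ∧ pdy (fun w => γ w 0 0) z = 0)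
    (h01 : pdx (fun w => γ w 0 1) z = G1 z * γ z 0 1 ∧ pdy (fun w => γ w 0 1) z = G2 z * γ z 0 1)
    (h11 : pdx (fun w => γ w 1 1) z = 0 ∧ pdy (fun w => γ w 1 1) z = 2 * G2 z * γ z 1 1)
    (a b c : Fin 2) :
    pd2 c (fun w => γ w a b) z
      - (∑ d, γ z d b * conn2 G1 G2 z d a c)
      - (∑ d, γ z a d * conn2 G1 G2 z d b c) = 0 := by
  fin_cases a <;> fin_cases b <;> fin_cases c <;>
    simp [pd2, conn2, hsymm, h00, h01, h11] <;> ring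

section PartialDerivatives

variable {g k : ℝ → ℝ} {g' k' : ℝ} {z : ℝ × ℝ}

theorem HasDerivAt.hasFDerivAt_comp_fst (hg : HasDerivAt g g' z.1) :
    HasFDerivAt (fun w : ℝ × ℝ => g w.1) (g' • ContinuousLinearMap.fst ℝ ℝ ℝ) z :=
  hg.comp_hasFDerivAt z hasFDerivAt_fst

theorem HasDerivAt.hasFDerivAt_comp_snd (hk : HasDerivAt k k' z.2) :
    HasFDerivAt (fun w : ℝ × ℝ => k w.2) (k' • ContinuousLinearMap.snd ℝ ℝ ℝ) z :=
  hk.comp_hasFDerivAt z hasFDerivAt_snd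

theorem pdx_comp_fst (hg : HasDerivAt g g' z.1) : pdx (fun w => g w.1) z = g' := by
  simp [pdx, hg.hasFDerivAt_comp_fst.fderiv]

theorem pdy_comp_fst (hg : HasDerivAt g g' z.1) : pdy (fun w => g w.1) z = 0 := by
  simp [pdy, hg.hasFDerivAt_comp_fst.fderiv]

theorem pdx_snd_mul_fst (hg : HasDerivAt g g' z.1) (hk : HasDerivAt k k' z.2) :
    pdx (fun w => k w.2 * g w.1) z = k z.2 * g' := by
  have H : HasFDerivAt (fun w : ℝ × ℝ => k w.2 * g w.1) _ z :=
    hk.hasFDerivAt_comp_snd.mul hg.hasFDerivAt_comp_fst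
  rw [pdx, H.fderiv]
  simp

theorem pdy_snd_mul_fst (hg : HasDerivAt g g' z.1) (hk : HasDerivAt k k' z.2) :
    pdy (fun w => k w.2 * g w.1) z = g z.1 * k' := by
  have H : HasFDerivAt (fun w : ℝ × ℝ => k w.2 * g w.1) _ z :=
    hk.hasFDerivAt_comp_snd.mul hg.hasFDerivAt_comp_fst
  rw [pdy, H.fderiv]
  simp

end PartialDerivatives

def caseTwoMetric (f h : ℝ → ℝ) (z : ℝ × ℝ) (a b : Fin 2) : ℝ :=
  if a = 0 ∧ b = 0 then f z.1
  else if a = 1 ∧ b = 1 then 0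
  else h z.2 * Real.sqrt (f z.1)

section CaseTwo

variable {I₁ I₂ : Set ℝ} {f h : ℝ → ℝ}

@[simp] theorem caseTwoMetric_zero_zero (z : ℝ × ℝ) : caseTwoMetric f h z 0 0 = f z.1 := rfl

@[simp] theorem caseTwoMetric_zero_one (z : ℝ × ℝ) :
    caseTwoMetric f h z 0 1 = h z.2 * Real.sqrt (f z.1) := rfl

@[simp] theorem caseTwoMetric_one_one (z : ℝ × ℝ) : caseTwoMetric f h z 1 1 = 0 := rfl

theorem caseTwoMetric_symm (z : ℝ × ℝ) (a b : Fin 2) :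
    caseTwoMetric f h z a b = caseTwoMetric f h z b a := by
  fin_cases a <;> fin_cases b <;> rfl

theorem caseTwoMetric_contDiffOn {n : WithTop ℕ∞} (hf : ContDiffOn ℝ n f I₁)
    (hf0 : ∀ x ∈ I₁, 0 < f x) (hh : ContDiffOn ℝ n h I₂) (a b : Fin 2) :
    ContDiffOn ℝ n (fun z => caseTwoMetric f h z a b) (I₁ ×ˢ I₂) := by
  have hf' : ContDiffOn ℝ n (fun z : ℝ × ℝ => f z.1) (I₁ ×ˢ I₂) :=
    hf.comp contDiffOn_fst fun z hz => hz.1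
  have hh' : ContDiffOn ℝ n (fun z : ℝ × ℝ => h z.2) (I₁ ×ˢ I₂) :=
    hh.comp contDiffOn_snd fun z hz => hz.2
  have hoff : ContDiffOn ℝ n (fun z : ℝ × ℝ => h z.2 * Real.sqrt (f z.1)) (I₁ ×ˢ I₂) :=
    hh'.mul (hf'.sqrt fun z hz => (hf0 z.1 hz.1).ne')
  fin_cases a <;> fin_cases b
  exacts [hf', hoff, hoff, contDiffOn_const]

theorem caseTwoMetric_det (z : ℝ × ℝ) (hz : 0 ≤ f z.1) :
    f z.1 * 0 - (h z.2 * Real.sqrt (f z.1)) * (h z.2 * Real.sqrt (f z.1)) =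
      -((h z.2) ^ 2 * f z.1) := by
  linear_combination -(h z.2) ^ 2 * Real.mul_self_sqrt hz

theorem covConstOn_caseTwoMetric (hI₁ : IsOpen I₁) (hI₂ : IsOpen I₂)
    (hf : DifferentiableOn ℝ f I₁) (hf0 : ∀ x ∈ I₁, 0 < f x)
    (hh : DifferentiableOn ℝ h I₂) (hh0 : ∀ y ∈ I₂, h y ≠ 0) :
    CovConstOn (fun z => deriv f z.1 / (2 * f z.1)) (fun z => deriv h z.2 / h z.2)
      (caseTwoMetric f h) (I₁ ×ˢ I₂) := by
  rintro z ⟨hz₁, hz₂⟩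
  have hfz := hf0 z.1 hz₁
  have hfd := (hf.differentiableAt (hI₁.mem_nhds hz₁)).hasDerivAt
  have hhd := (hh.differentiableAt (hI₂.mem_nhds hz₂)).hasDerivAt
  have hsqrtd := hfd.sqrt hfz.ne'
  refine covDeriv_conn2_eq_zero_of_symm (fun w => rfl) ?_ ?_ ?_ <;>
    simp only [caseTwoMetric_zero_zero, caseTwoMetric_zero_one, caseTwoMetric_one_one]
  · rw [pdx_comp_fst hfd, pdy_comp_fst hfd]
    exact ⟨by field_simp, rfl⟩
  · rw [pdx_snd_mul_fst hsqrtd hhd, pdy_snd_mul_fst hsqrtd hhd]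
    have hhz := hh0 z.2 hz₂
    constructor
    · field_simp
      rw [Real.sq_sqrt hfz.le]
    · field_simp
  · simp [pdx, pdy]

end CaseTwo

theorem stmt12_general (I₁ I₂ : Set ℝ)
    (hI₁ : IsOpen I₁)
    (hI₂ : IsOpen I₂)
    (f h : ℝ → ℝ)
    (hf : ContDiffOn ℝ (⊤ : ℕ∞) f I₁) (hf0 : ∀ x ∈ I₁, 0 < f x)
    (hh : ContDiffOn ℝ (⊤ : ℕ∞) h I₂) (hh0 : ∀ y ∈ I₂, h y ≠ 0) :
    CovConstOn (fun z => deriv f z.1 / (2 * f z.1)) (fun z => deriv h z.2 / h z.2)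
      (fun z a b =>
        if a = 0 ∧ b = 0 then f z.1
        else if a = 1 ∧ b = 1 then 0
        else h z.2 * Real.sqrt (f z.1)) (I₁ ×ˢ I₂) ∧
    (∀ z ∈ I₁ ×ˢ I₂,
      f z.1 * 0 - (h z.2 * Real.sqrt (f z.1)) * (h z.2 * Real.sqrt (f z.1)) =
        -((h z.2) ^ 2 * f z.1) ∧
      -((h z.2) ^ 2 * f z.1) ≠ 0) ∧
    IsKineticMetricOn (fun z => deriv f z.1 / (2 * f z.1)) (fun z => deriv h z.2 / h z.2)
      (fun z a b =>
        if a = 0 ∧ b = 0 then f z.1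
        else if a = 1 ∧ b = 1 then 0
        else h z.2 * Real.sqrt (f z.1)) (I₁ ×ˢ I₂) := by
  have hcov : CovConstOn _ _ (caseTwoMetric f h) (I₁ ×ˢ I₂) :=
    covConstOn_caseTwoMetric hI₁ hI₂ (hf.differentiableOn (by simp)) hf0
      (hh.differentiableOn (by simp)) hh0
  have hdet : ∀ z ∈ I₁ ×ˢ I₂,
      f z.1 * 0 - (h z.2 * Real.sqrt (f z.1)) * (h z.2 * Real.sqrt (f z.1)) =
        -((h z.2) ^ 2 * f z.1) ∧ -((h z.2) ^ 2 * f z.1) ≠ 0 := fun z hz =>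
    ⟨caseTwoMetric_det z (hf0 z.1 hz.1).le,
      neg_ne_zero.2 (mul_ne_zero (pow_ne_zero 2 (hh0 z.2 hz.2)) (hf0 z.1 hz.1).ne')⟩
  exact ⟨hcov, hdet, caseTwoMetric_contDiffOn hf hf0 hh, caseTwoMetric_symm, hcov,
    fun z hz => (hdet z hz).1 ▸ (hdet z hz).2⟩

/-- Proposition on Riemannian connections, case 2. For
`Γ¹₁₁ = f'/(2f)`, `Γ²₂₂ = h'/h` on `U = I₁ × I₂`, the matrix field
`γ = [[f, h√f],[h√f, 0]]` is covariantly constant with `det γ = −h²f ≠ 0`;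
hence the connection is Riemannian with kinetic metric `γ`. -/
theorem stmt12 (I₁ I₂ : Set ℝ)
    (hI₁ : IsOpen I₁) (hI₁' : I₁.OrdConnected)
    (hI₂ : IsOpen I₂) (hI₂' : I₂.OrdConnected)
    (f h : ℝ → ℝ)
    (hf : ContDiffOn ℝ (⊤ : ℕ∞) f I₁) (hf0 : ∀ x ∈ I₁, 0 < f x)
    (hh : ContDiffOn ℝ (⊤ : ℕ∞) h I₂) (hh0 : ∀ y ∈ I₂, h y ≠ 0) :
    CovConstOn (fun z => deriv f z.1 / (2 * f z.1)) (fun z => deriv h z.2 / h z.2)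
      (fun z a b =>
        if a = 0 ∧ b = 0 then f z.1
        else if a = 1 ∧ b = 1 then 0
        else h z.2 * Real.sqrt (f z.1)) (I₁ ×ˢ I₂) ∧
    (∀ z ∈ I₁ ×ˢ I₂,
      f z.1 * 0 - (h z.2 * Real.sqrt (f z.1)) * (h z.2 * Real.sqrt (f z.1)) =
        -((h z.2) ^ 2 * f z.1) ∧
      -((h z.2) ^ 2 * f z.1) ≠ 0) ∧
    IsKineticMetricOn (fun z => deriv f z.1 / (2 * f z.1)) (fun z => deriv h z.2 / h z.2)
      (fun z a b =>
        if a = 0 ∧ b = 0 then f z.1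
        else if a = 1 ∧ b = 1 then 0
        else h z.2 * Real.sqrt (f z.1)) (I₁ ×ˢ I₂) :=
  stmt12_general I₁ I₂ hI₁ hI₂ f h hf hf0 hh hh0
end
end

section
/- (Proposition on Riemannian connections, case 4.) Let I₁, I₂ ⊆ ℝ be open intervals, f : I₁ → ℝ and h : I₂ → ℝ smooth with f(x) > 0 and h(y) > 0, and let c₀ ∈ ℝ with c₀ ≠ 1 and c₀ ≠ −1. Consider the symmetric connection on U = I₁ × I₂ whose only nonzero coefficients are Γ¹₁₁ = f'(x)/(2f(x)) and Γ²₂₂ = h'(y)/(2h(y)). Then the symmetric matrix field γ_{ab} = [[f(x), c₀√(f(x)h(y))],[c₀√(f(x)h(y)), h(y)]] is covariantly constant with respect to this connection and satisfies det[γ_{ab}] = (1 − c₀²) f(x)h(y) ≠ 0 on U; hence the connection is Riemannian with kinetic metric γ_{ab}. -/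
/-!
Since `Γ^d_{ac}` vanishes unless `d = a = c`, the equation for `γ_{ab,c}` involves no other
entry of `γ`: it reads `∂_c γ_{ab} = (Γ^a_{ac} + Γ^b_{bc}) γ_{ab}`. With `F₁ = f(x)`, `F₂ = h(y)`
we have `Γ^a_{aa} = ∂_a log √F_a`, so every entry of the form `const · √(F_a F_b)` solves it,
and `f = √(f f)`, `h = √(h h)`, `c₀ √(f h)` are all of this form. The determinant is
`f h - c₀² (√(f h))² = (1 - c₀²) f h`.
-/

noncomputable section
open scoped BigOperators

section PartialDerivatives

variable {F G : ℝ × ℝ → ℝ} {f : ℝ → ℝ} {z : ℝ × ℝ}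

lemma pd2_comp_fst (hf : DifferentiableAt ℝ f z.1) (c : Fin 2) :
    pd2 c (fun w => f w.1) z = if c = 0 then deriv f z.1 else 0 := by
  have H : HasFDerivAt (fun w : ℝ × ℝ => f w.1) _ z :=
    hf.hasDerivAt.hasFDerivAt.comp z hasFDerivAt_fst
  split_ifs with hc <;> simp [pd2, pdx, pdy, hc, H.fderiv]

lemma pd2_comp_snd (hf : DifferentiableAt ℝ f z.2) (c : Fin 2) :
    pd2 c (fun w => f w.2) z = if c = 0 then 0 else deriv f z.2 := by
  have H : HasFDerivAt (fun w : ℝ × ℝ => f w.2) _ z :=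
    hf.hasDerivAt.hasFDerivAt.comp z hasFDerivAt_snd
  split_ifs with hc <;> simp [pd2, pdx, pdy, hc, H.fderiv]

lemma pd2_mul (hF : DifferentiableAt ℝ F z) (hG : DifferentiableAt ℝ G z) (c : Fin 2) :
    pd2 c (fun w => F w * G w) z = F z * pd2 c G z + G z * pd2 c F z := by
  have H : HasFDerivAt (fun w => F w * G w) _ z := hF.hasFDerivAt.mul hG.hasFDerivAt
  unfold pd2 pdx pdy
  split_ifs <;> simp [H.fderiv]

lemma pd2_const_mul_sqrt (hF : DifferentiableAt ℝ F z) (hz : F z ≠ 0) (k : ℝ) (c : Fin 2) :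
    pd2 c (fun w => k * √(F w)) z = k * pd2 c F z / (2 * √(F z)) := by
  have H := ((hF.hasFDerivAt.sqrt hz).const_mul k).fderiv
  unfold pd2 pdx pdy
  split_ifs <;> simp [H] <;> ring

lemma pd2_const_mul_sqrt_mul {h : ℝ → ℝ} (hf : DifferentiableAt ℝ f z.1)
    (hh : DifferentiableAt ℝ h z.2) (hf0 : 0 < f z.1) (hh0 : 0 < h z.2) (k : ℝ) (c : Fin 2) :
    pd2 c (fun w => k * √(f w.1 * h w.2)) z = k * √(f z.1 * h z.2) *
      if c = 0 then deriv f z.1 / (2 * f z.1) else deriv h z.2 / (2 * h z.2) := by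
  have hF : DifferentiableAt ℝ (fun w : ℝ × ℝ => f w.1) z := hf.comp z differentiableAt_fst
  have hH : DifferentiableAt ℝ (fun w : ℝ × ℝ => h w.2) z := hh.comp z differentiableAt_snd
  have hsq : √(f z.1 * h z.2) ^ 2 = f z.1 * h z.2 := Real.sq_sqrt (by positivity)
  have hsqrt : √(f z.1 * h z.2) ≠ 0 := by positivity
  rw [pd2_const_mul_sqrt (F := fun w => f w.1 * h w.2) (hF.mul hH) (by positivity), pd2_mul hF hH,
    pd2_comp_fst hf, pd2_comp_snd hh]
  split_ifs
  · field_simp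
    linear_combination -k * deriv f z.1 * hsq
  · field_simp
    linear_combination -k * deriv h z.2 * hsq

end PartialDerivatives

section Connection

variable {G1 G2 : ℝ × ℝ → ℝ}

lemma conn2_eq_zero_of_ne {d a : Fin 2} (hda : d ≠ a) (z : ℝ × ℝ) (c : Fin 2) :
    conn2 G1 G2 z d a c = 0 := by
  fin_cases d <;> fin_cases a <;> simp_all [conn2]

lemma sum_mul_conn2 (v : Fin 2 → ℝ) (z : ℝ × ℝ) (a c : Fin 2) :
    ∑ d, v d * conn2 G1 G2 z d a c = v a * conn2 G1 G2 z a a c :=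
  Fintype.sum_eq_single a fun _ hda => by rw [conn2_eq_zero_of_ne hda, mul_zero]

lemma covConstOn_iff {γ : ℝ × ℝ → Fin 2 → Fin 2 → ℝ} {U : Set (ℝ × ℝ)} :
    CovConstOn G1 G2 γ U ↔ ∀ z ∈ U, ∀ a b c : Fin 2,
      pd2 c (fun w => γ w a b) z = γ z a b * (conn2 G1 G2 z a a c + conn2 G1 G2 z b b c) := by
  simp only [CovConstOn, sum_mul_conn2 (fun d => γ _ d _), sum_mul_conn2 (γ _ _), sub_sub,
    sub_eq_zero, mul_add]

end Connection

def sqrtMetric (f h : ℝ → ℝ) (c₀ : ℝ) (z : ℝ × ℝ) (a b : Fin 2) : ℝ :=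
  if a = 0 ∧ b = 0 then f z.1
  else if a = 1 ∧ b = 1 then h z.2
  else c₀ * √(f z.1 * h z.2)

section SqrtMetric

variable {I₁ I₂ : Set ℝ} {f h : ℝ → ℝ} (c₀ : ℝ)

lemma sqrtMetric_symm (z : ℝ × ℝ) (a b : Fin 2) :
    sqrtMetric f h c₀ z a b = sqrtMetric f h c₀ z b a := by
  fin_cases a <;> fin_cases b <;> rfl

lemma contDiffOn_sqrtMetric {n : WithTop ℕ∞} (hf : ContDiffOn ℝ n f I₁) (hh : ContDiffOn ℝ n h I₂)
    (hf0 : ∀ x ∈ I₁, 0 < f x) (hh0 : ∀ y ∈ I₂, 0 < h y) (a b : Fin 2) :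
    ContDiffOn ℝ n (fun z => sqrtMetric f h c₀ z a b) (I₁ ×ˢ I₂) := by
  have hF : ContDiffOn ℝ n (fun z : ℝ × ℝ => f z.1) (I₁ ×ˢ I₂) :=
    hf.comp contDiffOn_fst fun _ hz => hz.1
  have hH : ContDiffOn ℝ n (fun z : ℝ × ℝ => h z.2) (I₁ ×ˢ I₂) :=
    hh.comp contDiffOn_snd fun _ hz => hz.2
  have hS : ContDiffOn ℝ n (fun z : ℝ × ℝ => c₀ * √(f z.1 * h z.2)) (I₁ ×ˢ I₂) :=
    contDiffOn_const.mul <| (hF.mul hH).sqrt fun z hz => (mul_pos (hf0 _ hz.1) (hh0 _ hz.2)).ne'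
  fin_cases a <;> fin_cases b
  exacts [hF, hS, hS, hH]

lemma covConstOn_sqrtMetric (hf : ∀ x ∈ I₁, DifferentiableAt ℝ f x)
    (hh : ∀ y ∈ I₂, DifferentiableAt ℝ h y) (hf0 : ∀ x ∈ I₁, 0 < f x) (hh0 : ∀ y ∈ I₂, 0 < h y) :
    CovConstOn (fun z => deriv f z.1 / (2 * f z.1)) (fun z => deriv h z.2 / (2 * h z.2))
      (sqrtMetric f h c₀) (I₁ ×ˢ I₂) := by
  refine covConstOn_iff.mpr fun z ⟨hx, hy⟩ a b c => ?_
  have hfx := (hf0 _ hx).ne'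
  have hhy := (hh0 _ hy).ne'
  fin_cases a <;> fin_cases b <;> fin_cases c <;>
    simp [sqrtMetric, conn2, pd2_comp_fst (hf _ hx), pd2_comp_snd (hh _ hy),
      pd2_const_mul_sqrt_mul (hf _ hx) (hh _ hy) (hf0 _ hx) (hh0 _ hy)] <;> field_simp <;> ring

lemma sqrtMetric_det {z : ℝ × ℝ} (hfh : 0 ≤ f z.1 * h z.2) :
    sqrtMetric f h c₀ z 0 0 * sqrtMetric f h c₀ z 1 1
        - sqrtMetric f h c₀ z 0 1 * sqrtMetric f h c₀ z 1 0 = (1 - c₀ ^ 2) * (f z.1 * h z.2) := by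
  simp only [sqrtMetric, Fin.isValue, and_self, if_true, zero_ne_one, one_ne_zero, and_false,
    false_and, if_false]
  linear_combination (-c₀ ^ 2) * Real.sq_sqrt hfh

end SqrtMetric

lemma one_sub_sq_ne_zero {c : ℝ} (hc : c ≠ 1) (hc' : c ≠ -1) : 1 - c ^ 2 ≠ 0 :=
  sub_ne_zero.mpr (sq_ne_one_iff.mpr ⟨hc, hc'⟩).symm

theorem stmt13_general (I₁ I₂ : Set ℝ)
    (hI₁ : IsOpen I₁) (hI₂ : IsOpen I₂)
    (f h : ℝ → ℝ) (c₀ : ℝ) (hc₀ : c₀ ≠ 1) (hc₀' : c₀ ≠ -1)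
    (hf : ContDiffOn ℝ (⊤ : ℕ∞) f I₁) (hf0 : ∀ x ∈ I₁, 0 < f x)
    (hh : ContDiffOn ℝ (⊤ : ℕ∞) h I₂) (hh0 : ∀ y ∈ I₂, 0 < h y) :
    CovConstOn (fun z => deriv f z.1 / (2 * f z.1)) (fun z => deriv h z.2 / (2 * h z.2))
      (fun z a b =>
        if a = 0 ∧ b = 0 then f z.1
        else if a = 1 ∧ b = 1 then h z.2
        else c₀ * Real.sqrt (f z.1 * h z.2)) (I₁ ×ˢ I₂) ∧
    (∀ z ∈ I₁ ×ˢ I₂,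
      f z.1 * h z.2 - (c₀ * Real.sqrt (f z.1 * h z.2)) * (c₀ * Real.sqrt (f z.1 * h z.2)) =
        (1 - c₀ ^ 2) * (f z.1 * h z.2) ∧
      (1 - c₀ ^ 2) * (f z.1 * h z.2) ≠ 0) ∧
    IsKineticMetricOn (fun z => deriv f z.1 / (2 * f z.1)) (fun z => deriv h z.2 / (2 * h z.2))
      (fun z a b =>
        if a = 0 ∧ b = 0 then f z.1
        else if a = 1 ∧ b = 1 then h z.2
        else c₀ * Real.sqrt (f z.1 * h z.2)) (I₁ ×ˢ I₂) := by
  have hf' : ∀ x ∈ I₁, DifferentiableAt ℝ f x := fun x hx =>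
    (hf.differentiableOn (by simp)).differentiableAt (hI₁.mem_nhds hx)
  have hh' : ∀ y ∈ I₂, DifferentiableAt ℝ h y := fun y hy =>
    (hh.differentiableOn (by simp)).differentiableAt (hI₂.mem_nhds hy)
  have hcov := covConstOn_sqrtMetric c₀ hf' hh' hf0 hh0
  have hdet : ∀ z ∈ I₁ ×ˢ I₂,
      f z.1 * h z.2 - (c₀ * √(f z.1 * h z.2)) * (c₀ * √(f z.1 * h z.2)) =
        (1 - c₀ ^ 2) * (f z.1 * h z.2) ∧ (1 - c₀ ^ 2) * (f z.1 * h z.2) ≠ 0 := fun z hz =>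
    have hfh := mul_pos (hf0 _ hz.1) (hh0 _ hz.2)
    ⟨sqrtMetric_det c₀ hfh.le, mul_ne_zero (one_sub_sq_ne_zero hc₀ hc₀') hfh.ne'⟩
  exact ⟨hcov, hdet, contDiffOn_sqrtMetric c₀ hf hh hf0 hh0, sqrtMetric_symm c₀, hcov,
    fun z hz => (hdet z hz).1.trans_ne (hdet z hz).2⟩

/-- Proposition on Riemannian connections, case 4. For
`Γ¹₁₁ = f'/(2f)`, `Γ²₂₂ = h'/(2h)` on `U = I₁ × I₂` and `c₀ ≠ ±1`, the matrix
field `γ = [[f, c₀√(fh)],[c₀√(fh), h]]` is covariantly constant with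
`det γ = (1−c₀²)fh ≠ 0`; hence the connection is Riemannian with kinetic
metric `γ`. -/
theorem stmt13 (I₁ I₂ : Set ℝ)
    (hI₁ : IsOpen I₁) (hI₁' : I₁.OrdConnected)
    (hI₂ : IsOpen I₂) (hI₂' : I₂.OrdConnected)
    (f h : ℝ → ℝ) (c₀ : ℝ) (hc₀ : c₀ ≠ 1) (hc₀' : c₀ ≠ -1)
    (hf : ContDiffOn ℝ (⊤ : ℕ∞) f I₁) (hf0 : ∀ x ∈ I₁, 0 < f x)
    (hh : ContDiffOn ℝ (⊤ : ℕ∞) h I₂) (hh0 : ∀ y ∈ I₂, 0 < h y) :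
    CovConstOn (fun z => deriv f z.1 / (2 * f z.1)) (fun z => deriv h z.2 / (2 * h z.2))
      (fun z a b =>
        if a = 0 ∧ b = 0 then f z.1
        else if a = 1 ∧ b = 1 then h z.2
        else c₀ * Real.sqrt (f z.1 * h z.2)) (I₁ ×ˢ I₂) ∧
    (∀ z ∈ I₁ ×ˢ I₂,
      f z.1 * h z.2 - (c₀ * Real.sqrt (f z.1 * h z.2)) * (c₀ * Real.sqrt (f z.1 * h z.2)) =
        (1 - c₀ ^ 2) * (f z.1 * h z.2) ∧
      (1 - c₀ ^ 2) * (f z.1 * h z.2) ≠ 0) ∧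
    IsKineticMetricOn (fun z => deriv f z.1 / (2 * f z.1)) (fun z => deriv h z.2 / (2 * h z.2))
      (fun z a b =>
        if a = 0 ∧ b = 0 then f z.1
        else if a = 1 ∧ b = 1 then h z.2
        else c₀ * Real.sqrt (f z.1 * h z.2)) (I₁ ×ˢ I₂) :=
  stmt13_general I₁ I₂ hI₁ hI₂ f h c₀ hc₀ hc₀' hf hf0 hh hh0
end
end

section
/- (Proposition: criterion for a non-Riemannian connection.) Let U ⊆ ℝ² be open and let Γ¹₁₁(x,y) and Γ²₂₂(x,y) be smooth; consider the symmetric connection on U whose only possibly nonzero coefficients are Γ¹₁₁ and Γ²₂₂. If there exists a smooth symmetric matrix field γ_{ab} on U that is covariantly constant with respect to this connection and satisfies det[γ_{ab}] ≠ 0 everywhere on U, then ∂Γ¹₁₁/∂y = ∂Γ²₂₂/∂x at every point of U. Equivalently, if ∂Γ¹₁₁/∂y ≠ ∂Γ²₂₂/∂x at some point of U, the connection admits no kinetic metric, i.e. the dynamical system ẍ = −Q¹(x,y) − Γ¹₁₁ ẋ², ÿ = −Q²(x,y) − Γ²₂₂ ẏ² is non-Riemannian. -/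
/-!
Since `Γ^d_{ac}` vanishes unless `d = a = c`, covariant constancy of `γ` is the linear system
`∂ₓγ_{ab} = p γ_{ab} Γ¹₁₁`, `∂ᵧγ_{ab} = q γ_{ab} Γ²₂₂`, where `p` and `q` count the indices
among `a, b` equal to `1` and to `2`. Equating the mixed partials of `γ_{ab}` gives
`γ_{ab} (p ∂ᵧΓ¹₁₁ - q ∂ₓΓ²₂₂) = 0`. So `γ₁₁ ∂ᵧΓ¹₁₁ = 0`, `γ₂₂ ∂ₓΓ²₂₂ = 0`, and the off-diagonal
entries vanish unless `∂ᵧΓ¹₁₁ = ∂ₓΓ²₂₂`; but if they vanish, `det γ ≠ 0` forces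
`∂ᵧΓ¹₁₁ = ∂ₓΓ²₂₂ = 0`.
-/

noncomputable section
open scoped BigOperators

open Filter Topology

section PartialDerivatives

variable {f g : ℝ × ℝ → ℝ} {z : ℝ × ℝ}

theorem Filter.EventuallyEq.pdx_eq (h : f =ᶠ[𝓝 z] g) : pdx f z = pdx g z := by
  rw [pdx, pdx, h.fderiv_eq]

theorem Filter.EventuallyEq.pdy_eq (h : f =ᶠ[𝓝 z] g) : pdy f z = pdy g z := by
  rw [pdy, pdy, h.fderiv_eq]

theorem pdx_mul (hf : DifferentiableAt ℝ f z) (hg : DifferentiableAt ℝ g z) :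
    pdx (fun w => f w * g w) z = pdx f z * g z + f z * pdx g z := by
  simp only [pdx, fderiv_fun_mul hf hg, add_apply, smul_apply, smul_eq_mul]
  ring

theorem pdy_mul (hf : DifferentiableAt ℝ f z) (hg : DifferentiableAt ℝ g z) :
    pdy (fun w => f w * g w) z = pdy f z * g z + f z * pdy g z := by
  simp only [pdy, fderiv_fun_mul hf hg, add_apply, smul_apply, smul_eq_mul]
  ring

theorem pdx_const_mul (c : ℝ) (hf : DifferentiableAt ℝ f z) :
    pdx (fun w => c * f w) z = c * pdx f z := by
  simp only [pdx, fderiv_const_mul hf, smul_apply, smul_eq_mul]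

theorem pdy_const_mul (c : ℝ) (hf : DifferentiableAt ℝ f z) :
    pdy (fun w => c * f w) z = c * pdy f z := by
  simp only [pdy, fderiv_const_mul hf, smul_apply, smul_eq_mul]

theorem pdy_pdx_comm (hf : ContDiffAt ℝ 2 f z) : pdy (pdx f) z = pdx (pdy f) z := by
  have hdf : DifferentiableAt ℝ (fderiv ℝ f) z :=
    (hf.fderiv_right (m := 1) (by norm_num)).differentiableAt (by norm_num)
  change fderiv ℝ (fun w => fderiv ℝ f w (1, 0)) z (0, 1) =
    fderiv ℝ (fun w => fderiv ℝ f w (0, 1)) z (1, 0)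
  simp only [fderiv_clm_apply hdf (differentiableAt_const _), fderiv_fun_const]
  simpa using hf.isSymmSndFDerivAt (by simp) (0, 1) (1, 0)

/-- Integrability condition of `∂ₓf = f A`, `∂ᵧf = f B`, from `∂ᵧ∂ₓf = ∂ₓ∂ᵧf`. -/
theorem mul_pdy_sub_pdx_eq_zero {A B : ℝ × ℝ → ℝ} (hf : ContDiffAt ℝ 2 f z)
    (hA : DifferentiableAt ℝ A z) (hB : DifferentiableAt ℝ B z)
    (hx : pdx f =ᶠ[𝓝 z] fun w => f w * A w) (hy : pdy f =ᶠ[𝓝 z] fun w => f w * B w) :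
    f z * (pdy A z - pdx B z) = 0 := by
  have hfd : DifferentiableAt ℝ f z := hf.differentiableAt (by norm_num)
  have hxy : pdy (pdx f) z = f z * B z * A z + f z * pdy A z := by
    rw [hx.pdy_eq, pdy_mul hfd hA, hy.eq_of_nhds]
  have hyx : pdx (pdy f) z = f z * A z * B z + f z * pdx B z := by
    rw [hy.pdx_eq, pdx_mul hfd hB, hx.eq_of_nhds]
  linear_combination pdy_pdx_comm hf - hxy + hyx

end PartialDerivatives

section KineticMetric

variable {G1 G2 : ℝ × ℝ → ℝ} {γ : ℝ × ℝ → Fin 2 → Fin 2 → ℝ} {U : Set (ℝ × ℝ)} {z : ℝ × ℝ}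

-- Indices are `0, 1 : Fin 2`, so `2 - a - b` and `a + b` count the indices equal to `0` and `1`.
theorem CovConstOn.pdx_eq (h : CovConstOn G1 G2 γ U) (hz : z ∈ U) (a b : Fin 2) :
    pdx (fun w => γ w a b) z = γ z a b * ((2 - a.val - b.val : ℝ) * G1 z) := by
  have hc := h z hz a b 0
  fin_cases a <;> fin_cases b <;>
    simp [pd2, conn2] at hc ⊢ <;> linarith

theorem CovConstOn.pdy_eq (h : CovConstOn G1 G2 γ U) (hz : z ∈ U) (a b : Fin 2) :
    pdy (fun w => γ w a b) z = γ z a b * ((a.val + b.val : ℝ) * G2 z) := by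
  have hc := h z hz a b 1
  fin_cases a <;> fin_cases b <;>
    simp [pd2, conn2] at hc ⊢ <;> linarith

theorem CovConstOn.mul_pdy_sub_pdx_eq_zero (h : CovConstOn G1 G2 γ U) (hU : U ∈ 𝓝 z)
    {a b : Fin 2} (hγ : ContDiffAt ℝ 2 (fun w => γ w a b) z)
    (hG1 : DifferentiableAt ℝ G1 z) (hG2 : DifferentiableAt ℝ G2 z) :
    γ z a b * ((2 - a.val - b.val : ℝ) * pdy G1 z - (a.val + b.val : ℝ) * pdx G2 z) = 0 := by
  rw [← pdy_const_mul _ hG1, ← pdx_const_mul _ hG2]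
  exact _root_.mul_pdy_sub_pdx_eq_zero hγ (hG1.const_mul _) (hG2.const_mul _)
    (eventually_of_mem hU fun w hw => h.pdx_eq hw a b)
    (eventually_of_mem hU fun w hw => h.pdy_eq hw a b)

end KineticMetric

theorem eq_of_det_ne_zero {a b c d p q : ℝ} (hdet : a * d - b * c ≠ 0) (ha : a * p = 0)
    (hd : d * q = 0) (hb : b * (p - q) = 0) (hc : c * (p - q) = 0) : p = q := by
  by_contra hpq
  have hb0 : b = 0 := (mul_eq_zero.mp hb).resolve_right (sub_ne_zero.mpr hpq)
  have hc0 : c = 0 := (mul_eq_zero.mp hc).resolve_right (sub_ne_zero.mpr hpq)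
  have had : a ≠ 0 ∧ d ≠ 0 := by simpa [hb0, hc0] using hdet
  exact hpq <| by
    rw [(mul_eq_zero.mp ha).resolve_left had.1, (mul_eq_zero.mp hd).resolve_left had.2]

/-- criterion for a non-Riemannian connection. If the
connection with only nonzero coefficients `Γ¹₁₁ = G1`, `Γ²₂₂ = G2` admits a
kinetic metric (a smooth symmetric covariantly constant matrix field with
nonvanishing determinant) on the open set `U`, then
`∂Γ¹₁₁/∂y = ∂Γ²₂₂/∂x` on `U`. -/
theorem stmt14 (U : Set (ℝ × ℝ)) (hU : IsOpen U) (G1 G2 : ℝ × ℝ → ℝ)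
    (hG1 : ContDiffOn ℝ (⊤ : ℕ∞) G1 U) (hG2 : ContDiffOn ℝ (⊤ : ℕ∞) G2 U)
    (γ : ℝ × ℝ → Fin 2 → Fin 2 → ℝ)
    (hγ : IsKineticMetricOn G1 G2 γ U) :
    ∀ z ∈ U, pdy G1 z = pdx G2 z := by
  obtain ⟨hsmooth, -, hcov, hdet⟩ := hγ
  intro z hz
  have hU : U ∈ 𝓝 z := hU.mem_nhds hz
  have key (a b : Fin 2) := hcov.mul_pdy_sub_pdx_eq_zero hU
    (((hsmooth a b).contDiffAt hU).of_le (WithTop.coe_le_coe.mpr le_top))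
    ((hG1.contDiffAt hU).differentiableAt (by simp))
    ((hG2.contDiffAt hU).differentiableAt (by simp))
  have k00 := key 0 0
  have k11 := key 1 1
  have k01 := key 0 1
  have k10 := key 1 0
  norm_num at k00 k11 k01 k10
  exact eq_of_det_ne_zero (hdet z hz) (mul_eq_zero.mpr k00) (mul_eq_zero.mpr k11)
    (mul_eq_zero.mpr k01) (mul_eq_zero.mpr k10)
end
end

section
/- Let k, p be nonzero real constants. Along every C² solution t ↦ (x(t), y(t)) of the system ẍ = −kx + py − (p/(ky+px)) ẋ², ÿ = −ky − px − (p/(py−kx)) ẏ², defined on a time interval on which (ky+px)(py−kx) ≠ 0, the quantity I₁ = (ky+px) ẋ + (py−kx) ẏ is constant. -/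
/-! Differentiating `I₁ = A ẋ + B ẏ` with `A = ky + px`, `B = py − kx` along a solution, the damping
terms cancel against `Ȧ ẋ` and `Ḃ ẏ` (since `A · (p/A) = p = B · (p/B)`), leaving
`A (py − kx) − B (ky + px) = AB − BA = 0`. A function with vanishing derivative on an interval is
constant. -/

namespace DampedCoupledOscillators

variable (k p : ℝ) (x y x' y' : ℝ → ℝ)

def firstIntegral (t : ℝ) : ℝ :=
  (k * y t + p * x t) * x' t + (p * y t - k * x t) * y' t

variable {k p x y x' y'}

theorem hasDerivAt_firstIntegral {t : ℝ}
    (hne : (k * y t + p * x t) * (p * y t - k * x t) ≠ 0)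
    (hx : HasDerivAt x (x' t) t) (hy : HasDerivAt y (y' t) t)
    (hx' : HasDerivAt x' (-(k * x t) + p * y t - p / (k * y t + p * x t) * (x' t) ^ 2) t)
    (hy' : HasDerivAt y' (-(k * y t) - p * x t - p / (p * y t - k * x t) * (y' t) ^ 2) t) :
    HasDerivAt (firstIntegral k p x y x' y') 0 t := by
  obtain ⟨hA, hB⟩ := mul_ne_zero_iff.mp hne
  have hdA := ((hy.const_mul k).add (hx.const_mul p)).mul hx'
  have hdB := ((hy.const_mul p).sub (hx.const_mul k)).mul hy'
  refine (hdA.add hdB).congr_deriv ?_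
  simp only [Pi.add_apply, Pi.sub_apply]
  field_simp
  ring

end DampedCoupledOscillators

theorem stmt16_general (k p : ℝ) (a b : ℝ)
    (x y x' y' : ℝ → ℝ)
    (hne : ∀ t ∈ Set.Ioo a b, (k * y t + p * x t) * (p * y t - k * x t) ≠ 0)
    (hx : ∀ t ∈ Set.Ioo a b, HasDerivAt x (x' t) t)
    (hy : ∀ t ∈ Set.Ioo a b, HasDerivAt y (y' t) t)
    (hx' : ∀ t ∈ Set.Ioo a b, HasDerivAt x'
      (-(k * x t) + p * y t - p / (k * y t + p * x t) * (x' t) ^ 2) t)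
    (hy' : ∀ t ∈ Set.Ioo a b, HasDerivAt y'
      (-(k * y t) - p * x t - p / (p * y t - k * x t) * (y' t) ^ 2) t) :
    ∀ t₁ ∈ Set.Ioo a b, ∀ t₂ ∈ Set.Ioo a b,
      (k * y t₁ + p * x t₁) * x' t₁ + (p * y t₁ - k * x t₁) * y' t₁ =
      (k * y t₂ + p * x t₂) * x' t₂ + (p * y t₂ - k * x t₂) * y' t₂ := by
  have hderiv : ∀ t ∈ Set.Ioo a b,
      HasDerivAt (DampedCoupledOscillators.firstIntegral k p x y x' y') 0 t := fun t ht ↦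
    DampedCoupledOscillators.hasDerivAt_firstIntegral (hne t ht) (hx t ht) (hy t ht)
      (hx' t ht) (hy' t ht)
  intro t₁ ht₁ t₂ ht₂
  exact isOpen_Ioo.is_const_of_deriv_eq_zero isPreconnected_Ioo
    (fun t ht ↦ (hderiv t ht).differentiableAt.differentiableWithinAt)
    (fun t ht ↦ (hderiv t ht).deriv) ht₁ ht₂

/-- Along every C² solution of the coupled-oscillator system
with non-Riemannian quadratic damping
`ẍ = −kx + py − (p/(ky+px)) ẋ²`, `ÿ = −ky − px − (p/(py−kx)) ẏ²`,
defined on a time interval on which `(ky+px)(py−kx) ≠ 0`, the quantity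
`I₁ = (ky+px) ẋ + (py−kx) ẏ` is constant. -/
theorem stmt16 (k p : ℝ) (hk : k ≠ 0) (hp : p ≠ 0) (a b : ℝ)
    (x y x' y' : ℝ → ℝ)
    (hne : ∀ t ∈ Set.Ioo a b, (k * y t + p * x t) * (p * y t - k * x t) ≠ 0)
    (hx : ∀ t ∈ Set.Ioo a b, HasDerivAt x (x' t) t)
    (hy : ∀ t ∈ Set.Ioo a b, HasDerivAt y (y' t) t)
    (hx' : ∀ t ∈ Set.Ioo a b, HasDerivAt x'
      (-(k * x t) + p * y t - p / (k * y t + p * x t) * (x' t) ^ 2) t)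
    (hy' : ∀ t ∈ Set.Ioo a b, HasDerivAt y'
      (-(k * y t) - p * x t - p / (p * y t - k * x t) * (y' t) ^ 2) t) :
    ∀ t₁ ∈ Set.Ioo a b, ∀ t₂ ∈ Set.Ioo a b,
      (k * y t₁ + p * x t₁) * x' t₁ + (p * y t₁ - k * x t₁) * y' t₁ =
      (k * y t₂ + p * x t₂) * x' t₂ + (p * y t₂ - k * x t₂) * y' t₂ :=
  stmt16_general k p a b x y x' y' hne hx hy hx' hy'
end

section
/- Let β ≠ 0 be a real constant. Along every C² solution t ↦ (u(t), w(t)) with u(t) > 0 of the system ü = −(8β/u³)(u u̇ ẇ − w u̇²) − 1/u², ẅ = −(4β/u³)(u ẇ² − 4w u̇ ẇ) + 2w/u³, the quantity I = e^{12βw/u²} ( u̇ ẇ + 1/(12β) ) is constant, i.e. I is a quadratic first integral of this non-Riemannian dynamical system. -/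
/-!
Write `φ = 12βw/u²` and `K = u̇ẇ + 1/(12β)`. Along a solution, `φ̇ = 12β(uẇ − 2wu̇)/u³`, and
substituting the equations of motion into `K̇ = üẇ + u̇ẅ` gives exactly `K̇ = −φ̇ K`.
Hence `e^φ K` has zero derivative on the interval and is constant there.
-/

open Real Set

theorem hasDerivAt_exp_mul_eq_zero {φ K : ℝ → ℝ} {φ' t : ℝ} (hφ : HasDerivAt φ φ' t)
    (hK : HasDerivAt K (-φ' * K t) t) : HasDerivAt (fun s => exp (φ s) * K s) 0 t :=
  (hφ.exp.mul hK).congr_deriv (by ring)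

section Solution

variable {β : ℝ} {u w u' w' : ℝ → ℝ} {t : ℝ}

theorem hasDerivAt_const_mul_div_sq (c : ℝ) (hut : u t ≠ 0) (hud : HasDerivAt u (u' t) t)
    (hwd : HasDerivAt w (w' t) t) :
    HasDerivAt (fun s => c * w s / u s ^ 2) (c * (u t * w' t - 2 * w t * u' t) / u t ^ 3) t := by
  refine ((hwd.const_mul c).div (hud.pow 2) (pow_ne_zero 2 hut)).congr_deriv ?_
  rw [Pi.pow_apply]
  field_simp
  ring

theorem hasDerivAt_velocity_product (hβ : β ≠ 0) (hut : u t ≠ 0)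
    (hu' : HasDerivAt u'
      (-(8 * β / (u t) ^ 3) * (u t * u' t * w' t - w t * (u' t) ^ 2) - 1 / (u t) ^ 2) t)
    (hw' : HasDerivAt w'
      (-(4 * β / (u t) ^ 3) * (u t * (w' t) ^ 2 - 4 * w t * u' t * w' t) + 2 * w t / (u t) ^ 3) t) :
    HasDerivAt (fun s => u' s * w' s + 1 / (12 * β))
      (-(12 * β * (u t * w' t - 2 * w t * u' t) / u t ^ 3) * (u' t * w' t + 1 / (12 * β))) t := by
  refine ((hu'.mul hw').add_const (1 / (12 * β))).congr_deriv ?_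
  field_simp
  ring

end Solution

/-- Along every C² solution with `u > 0` of the
non-Riemannian system
`ü = −(8β/u³)(u u̇ ẇ − w u̇²) − 1/u²`,
`ẅ = −(4β/u³)(u ẇ² − 4w u̇ ẇ) + 2w/u³`,
the quantity `I = e^{12βw/u²}(u̇ ẇ + 1/(12β))` is constant, i.e. `I` is a
quadratic first integral of the system. -/
theorem stmt17 (β : ℝ) (hβ : β ≠ 0) (a b : ℝ)
    (u w u' w' : ℝ → ℝ)
    (hu : ∀ t ∈ Set.Ioo a b, 0 < u t)
    (hud : ∀ t ∈ Set.Ioo a b, HasDerivAt u (u' t) t)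
    (hwd : ∀ t ∈ Set.Ioo a b, HasDerivAt w (w' t) t)
    (hu' : ∀ t ∈ Set.Ioo a b, HasDerivAt u'
      (-(8 * β / (u t) ^ 3) * (u t * u' t * w' t - w t * (u' t) ^ 2) - 1 / (u t) ^ 2) t)
    (hw' : ∀ t ∈ Set.Ioo a b, HasDerivAt w'
      (-(4 * β / (u t) ^ 3) * (u t * (w' t) ^ 2 - 4 * w t * u' t * w' t) + 2 * w t / (u t) ^ 3) t) :
    ∀ t₁ ∈ Set.Ioo a b, ∀ t₂ ∈ Set.Ioo a b,
      Real.exp (12 * β * w t₁ / (u t₁) ^ 2) * (u' t₁ * w' t₁ + 1 / (12 * β)) =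
      Real.exp (12 * β * w t₂ / (u t₂) ^ 2) * (u' t₂ * w' t₂ + 1 / (12 * β)) := by
  have hI : ∀ t ∈ Ioo a b, HasDerivAt
      (fun s => exp (12 * β * w s / u s ^ 2) * (u' s * w' s + 1 / (12 * β))) 0 t := by
    intro t ht
    have hut := (hu t ht).ne'
    exact hasDerivAt_exp_mul_eq_zero (hasDerivAt_const_mul_div_sq _ hut (hud t ht) (hwd t ht))
      (hasDerivAt_velocity_product hβ hut (hu' t ht) (hw' t ht))
  intro t₁ ht₁ t₂ ht₂
  exact isOpen_Ioo.is_const_of_deriv_eq_zero isPreconnected_Ioo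
    (fun t ht => (hI t ht).differentiableAt.differentiableWithinAt)
    (fun t ht => (hI t ht).deriv) ht₁ ht₂
end
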